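/- arXiv:1307.0638 — 8 statements merged into one kernel-verified Lean document; each statement's English description precedes it below -/
import Mathlib

section
/- Let k be an integer with k ∉ {0, 1}, and let f: ℝ → ℝ be an additive function satisfying f(x^k) = k x^(k-1) f(x) for all nonzero real x. Then f is a derivation, i.e., f(xy) = x f(y) + y f(x) for all x, y ∈ ℝ. -/
open Polynomial

lemma key_sq (n : ℕ) (hn : 2 ≤ n) (f : ℝ → ℝ)
    (hadd : ∀ x y : ℝ, f (x + y) = f x + f y)
    (hpow : ∀ x : ℝ, f (x ^ n) = (n : ℝ) * x ^ (n - 1) * f x) (x : ℝ) :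
    f (x ^ 2) = 2 * x * f x := by
  set F : ℝ →+ ℝ := AddMonoidHom.mk' f hadd with hFdef
  have hF : ∀ z, F z = f z := fun _ => rfl
  have h1 : f 1 = 0 := by
    have h := hpow 1
    simp only [one_pow, mul_one] at h
    have hn' : (2:ℝ) ≤ (n:ℝ) := by exact_mod_cast hn
    nlinarith [h]
  have hnat : ∀ m : ℕ, f (m : ℝ) = 0 := by
    intro m
    have e : ((m:ℝ)) = m • (1:ℝ) := by simp
    rw [e, ← hF, map_nsmul, hF, h1, smul_zero]
  have hexp : ∀ m : ℕ,
      ∑ i ∈ Finset.range (n+1), (n.choose i : ℝ) * f (x^i) * (m:ℝ)^(n-i)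
        = (n : ℝ) * ((m:ℝ) + x)^(n-1) * f x := by
    intro m
    have h2 : (x + (m:ℝ))^n
        = ∑ i ∈ Finset.range (n+1), (n.choose i * m^(n-i)) • x^i := by
      rw [add_pow]
      refine Finset.sum_congr rfl fun i _ => ?_
      rw [nsmul_eq_mul]
      push_cast
      ring
    have h := hpow (x + (m:ℝ))
    rw [h2, ← hF, map_sum] at h
    simp only [map_nsmul] at h
    simp only [hF, nsmul_eq_mul] at h
    rw [hadd, hnat m, add_zero] at h
    calc ∑ i ∈ Finset.range (n+1), (n.choose i : ℝ) * f (x^i) * (m:ℝ)^(n-i)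
        = ∑ i ∈ Finset.range (n+1), ((n.choose i * m^(n-i) : ℕ) : ℝ) * f (x^i) := by
          refine Finset.sum_congr rfl fun i _ => ?_; push_cast; ring
      _ = (n : ℝ) * ((m:ℝ) + x)^(n-1) * f x := by rw [h]; ring_nf
  set p : ℝ[X] := (∑ i ∈ Finset.range (n+1), C ((n.choose i : ℝ) * f (x^i)) * X^(n-i))
      - C ((n:ℝ) * f x) * (X + C x)^(n-1) with hp
  have hroot : ∀ m : ℕ, p.IsRoot (m:ℝ) := by
    intro m
    have : p.eval (m:ℝ) = (∑ i ∈ Finset.range (n+1), (n.choose i : ℝ) * f (x^i) * (m:ℝ)^(n-i))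
        - (n:ℝ) * f x * ((m:ℝ) + x)^(n-1) := by
      simp [hp, eval_finset_sum]
    rw [IsRoot, this, hexp m]
    ring
  have hp0 : p = 0 := by
    refine p.eq_zero_of_infinite_isRoot ?_
    refine (Set.infinite_range_of_injective (f := (Nat.cast : ℕ → ℝ)) Nat.cast_injective).mono ?_
    rintro - ⟨m, rfl⟩
    exact hroot m
  have hc : p.coeff (n-2) = 0 := by rw [hp0]; simp
  rw [hp] at hc
  rw [coeff_sub, finset_sum_coeff] at hc
  simp only [coeff_C_mul, coeff_X_pow, coeff_X_add_C_pow] at hc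
  rw [Finset.sum_eq_single_of_mem 2 (Finset.mem_range.mpr (by omega))
      (fun i hi hne => by
        have hi' : i ≤ n := Nat.lt_succ_iff.mp (Finset.mem_range.mp hi)
        rw [if_neg (by omega), mul_zero])] at hc
  have e1 : (n-1) - (n-2) = 1 := by omega
  have e2 : (n-1).choose (n-2) = n - 1 := by
    have e : n - 2 = (n-1) - 1 := by omega
    rw [e, Nat.choose_symm (by omega), Nat.choose_one_right]
  rw [if_pos rfl, e1, e2, pow_one] at hc
  have h1n : (1:ℕ) ≤ n := by omega
  have hch : 2 * n.choose 2 = n * (n - 1) := by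
    rw [Nat.choose_two_right, Nat.two_mul_div_two_of_even]
    have h := Nat.even_mul_succ_self (n-1)
    rwa [Nat.sub_add_cancel h1n, mul_comm] at h
  have hch' : (2:ℝ) * (n.choose 2 : ℝ) = (n:ℝ) * ((n:ℝ) - 1) := by
    have := congrArg (Nat.cast : ℕ → ℝ) hch
    push_cast [Nat.cast_sub h1n] at this
    linarith
  rw [Nat.cast_sub h1n] at hc
  have hC : (0:ℝ) < (n.choose 2 : ℝ) := by exact_mod_cast Nat.choose_pos hn
  have key : (n.choose 2:ℝ) * f (x^2) = (n.choose 2:ℝ) * (2*x*f x) := by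
    push_cast at hc
    linear_combination hc - x * f x * hch'
  exact mul_left_cancel₀ (ne_of_gt hC) key

theorem stmt_2 (k : ℤ) (hk0 : k ≠ 0) (hk1 : k ≠ 1) (f : ℝ → ℝ)
    (hadd : ∀ x y : ℝ, f (x + y) = f x + f y)
    (hpow : ∀ x : ℝ, x ≠ 0 → f (x ^ k) = (k : ℝ) * x ^ (k - 1) * f x) :
    ∀ x y : ℝ, f (x * y) = x * f y + y * f x := by
  have f0 : f 0 = 0 := by have := hadd 0 0; simp at this; linarith
  have hsq : ∀ x : ℝ, f (x ^ 2) = 2 * x * f x := by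
    by_cases hk : k = -1
    · subst hk
      have h1 : f 1 = 0 := by
        have h := hpow 1 one_ne_zero
        norm_num at h
        linarith
      have hneg : ∀ z : ℝ, f (-z) = - f z := by
        intro z
        have h := hadd z (-z)
        simp [f0] at h
        linarith
      have hsub : ∀ a b : ℝ, f (a - b) = f a - f b := by
        intro a b
        rw [sub_eq_add_neg, hadd, hneg]; ring
      have hinv : ∀ z : ℝ, z ≠ 0 → f z⁻¹ = - f z / z^2 := by
        intro z hz
        have h := hpow z hz
        norm_num at h
        rw [h]; field_simp
      intro x
      rcases eq_or_ne x 0 with rfl | hx0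
      · norm_num [f0]
      rcases eq_or_ne x 1 with rfl | hx1
      · norm_num [h1]
      set b := x - 1 with hbdef
      have hb : b ≠ 0 := sub_ne_zero.mpr hx1
      have hxb : x * b ≠ 0 := mul_ne_zero hx0 hb
      have key1 : (x*b)⁻¹ = b⁻¹ - x⁻¹ := by
        field_simp
        ring
      have h2 := hinv (x*b) hxb
      rw [key1, hsub, hinv b hb, hinv x hx0] at h2
      have hfb : f b = f x := by rw [hbdef, hsub, h1]; ring
      have hfxb : f (x*b) = f (x^2) - f x := by
        rw [show x * b = x^2 - x by rw [hbdef]; ring, hsub]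
      rw [hfb, hfxb] at h2
      have hx2 : (x:ℝ)^2 ≠ 0 := pow_ne_zero 2 hx0
      have hb2 : (b:ℝ)^2 ≠ 0 := pow_ne_zero 2 hb
      field_simp at h2
      have hne : (x*b)^2 ≠ 0 := pow_ne_zero _ hxb
      have h3 := mul_right_cancel₀ hne
        (show (-(f x * x^2) + b^2*f x) * (x*b)^2 = (f x - f (x^2)) * (x*b)^2 by
          linear_combination (x*b)^2 * h2)
      rw [hbdef] at h3
      linear_combination h3
    · set n : ℕ := (k*k).toNat with hndef
      have hkk : ((n:ℤ)) = k*k := Int.toNat_of_nonneg (mul_self_nonneg k)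
      have hn2 : 2 ≤ n := by
        have h4 : 4 ≤ k * k := by
          rcases (by omega : k ≤ -2 ∨ 2 ≤ k) with h | h <;> nlinarith
        omega
      have hpow' : ∀ x : ℝ, f (x ^ n) = (n:ℝ) * x ^ (n-1) * f x := by
        intro x
        rcases eq_or_ne x 0 with rfl | hx
        · rw [zero_pow (by omega), f0, zero_pow (by omega)]; ring
        · have hxk : x ^ k ≠ 0 := zpow_ne_zero k hx
          have h1 := hpow (x^k) hxk
          rw [hpow x hx] at h1
          have e1 : (x^k)^k = x ^ (k*k) := by rw [← zpow_mul]
          have e2 : (x^k)^(k-1) = x ^ (k*(k-1)) := by rw [← zpow_mul]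
          rw [e1, e2] at h1
          have e3 : x ^ (k*k) = x ^ n := by rw [← hkk, zpow_natCast]
          have e4 : (x:ℝ) ^ (k*(k-1)) * x^(k-1) = x ^ ((n:ℤ) - 1) := by
            rw [← zpow_add₀ hx]
            congr 1
            rw [hkk]; ring
          have e5 : x ^ ((n:ℤ)-1) = x ^ (n-1 : ℕ) := by
            rw [← zpow_natCast x (n-1)]
            congr 1
            omega
          have hnk : (n:ℝ) = (k:ℝ) * (k:ℝ) := by exact_mod_cast congrArg (Int.cast : ℤ → ℝ) hkk
          rw [e3] at h1
          rw [h1, hnk, ← e5, ← e4]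
          ring
      exact key_sq n hn2 f hadd hpow'
  intro x y
  have h := hsq (x + y)
  have e : (x+y)^2 = x^2 + (x*y + (x*y + y^2)) := by ring
  rw [e, hadd, hadd, hadd, hsq, hsq, hadd x y] at h
  linear_combination h / 2
end

section
/- Every additive function f: ℝ → ℝ satisfying f(1/x) = (1/x²) f(x) for all nonzero real x is linear, i.e., there is c ∈ ℝ with f(x) = c x for all x. -/
theorem stmt_3 (f : ℝ → ℝ)
    (hadd : ∀ x y : ℝ, f (x + y) = f x + f y)
    (hinv : ∀ x : ℝ, x ≠ 0 → f (1 / x) = (1 / x ^ 2) * f x) :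
    ∃ c : ℝ, ∀ x : ℝ, f x = c * x := by
  have h0 : f 0 = 0 := by have := hadd 0 0; simp at this; linarith [hadd 0 0]
  have hneg : ∀ x : ℝ, f (-x) = - f x := by
    intro x
    have := hadd x (-x)
    simp [h0] at this
    linarith
  have hsub : ∀ x y : ℝ, f (x - y) = f x - f y := by
    intro x y
    have := hadd (x - y) y
    simp at this
    linarith
  set c := f 1 with hc
  have hsq : ∀ t : ℝ, t ≠ 0 → f (t^2) = 2*t*f t - t^2 * c := by
    intro t ht
    by_cases h1 : t = -1
    · subst h1
      have := hneg 1
      norm_num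
      linarith
    · have ht1 : t + 1 ≠ 0 := fun h => h1 (by linarith)
      have e1 : (1:ℝ)/(t*(t+1)) = 1/t - 1/(t+1) := by field_simp; ring
      have e3 := hinv t ht
      have e4 := hinv (t+1) ht1
      have e5 := hinv (t*(t+1)) (mul_ne_zero ht ht1)
      have e6 : f (t*(t+1)) = f (t^2) + f t := by
        rw [show t*(t+1) = t^2 + t by ring, hadd]
      have e7 : f (t+1) = f t + c := hadd t 1
      have key : (1/(t*(t+1))^2) * (f (t^2) + f t)
          = (1/t^2)*f t - (1/(t+1)^2)*(f t + c) := by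
        rw [← e6, ← e5, e1, hsub, e3, e4, e7]
      field_simp at key
      replace key : f (t ^ 2) + f t = f t * (t + 1) ^ 2 - t ^ 2 * (f t + c) := by
        have hne : (t^2 * (t+1)^2 : ℝ) ≠ 0 :=
          mul_ne_zero (pow_ne_zero _ ht) (pow_ne_zero _ ht1)
        apply mul_right_cancel₀ hne
        linear_combination (t^2 * (t+1)^2) * key
      linear_combination key
  refine ⟨c, fun x => ?_⟩
  by_cases hx0 : x = 0
  · simp [hx0, h0]
  by_cases hx1 : x = 1
  · simp [hx1, hc]
  by_cases hxm1 : x = -1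
  · rw [hxm1, hneg 1]; ring
  · have hs : (1:ℝ)/x ≠ 0 := one_div_ne_zero hx0
    have hxs : x + 1/x ≠ 0 := by
      intro h
      have h' : x^2 + 1 = 0 := by field_simp at h; nlinarith [h]
      nlinarith [sq_nonneg x]
    have e1 : f ((x + 1/x)^2) = f (x^2) + 2*c + f ((1/x)^2) := by
      have exp : (x + 1/x)^2 = x^2 + (1 + 1) + (1/x)^2 := by field_simp; ring
      rw [exp, hadd, hadd, hadd]
      ring
    have e6 : f (x + 1/x) = f x + f (1/x) := hadd _ _
    have e5 := hinv x hx0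
    rw [hsq x hx0, hsq (1/x) hs, hsq (x + 1/x) hxs, e6, e5] at e1
    field_simp at e1
    have hE : 4*x^4 * f x = 4*x^4 * (c * x) := by linear_combination x^2 * e1
    exact mul_left_cancel₀ (by positivity) hE
end

section
/- Let p ∈ ℕ and let f: ℝ^p → ℝ be a continuous function that is additive in each variable separately. Then there exists c ∈ ℝ such that f(x₁, …, x_p) = c · x₁ x₂ ⋯ x_p for all x₁, …, x_p ∈ ℝ. -/
theorem stmt_4 (p : ℕ) (f : (Fin p → ℝ) → ℝ)
    (hcont : Continuous f)
    (hadd : ∀ (i : Fin p) (x : Fin p → ℝ) (y : ℝ),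
      f (Function.update x i (x i + y)) = f x + f (Function.update x i y)) :
    ∃ c : ℝ, ∀ x : Fin p → ℝ, f x = c * ∏ i, x i := by
  -- Step 1: in each variable, f is linear: f (update x i t) = t * f (update x i 1)
  have hlin : ∀ (x : Fin p → ℝ) (i : Fin p) (t : ℝ),
      f (Function.update x i t) = t * f (Function.update x i 1) := by
    intro x i t
    set g : ℝ → ℝ := fun t => f (Function.update x i t) with hg
    have gadd : ∀ s y : ℝ, g (s + y) = g s + g y := by
      intro s y
      have h := hadd i (Function.update x i s) y
      simpa [Function.update_idem, Function.update_self] using h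
    have gcont : Continuous g := by
      apply hcont.comp
      exact continuous_pi fun j => by
        rcases eq_or_ne j i with rfl | hj
        · simpa [Function.update_self] using continuous_id'
        · simp only [Function.update_of_ne hj]; exact continuous_const
    let G : ℝ →+ ℝ := AddMonoidHom.mk' g (fun a b => gadd a b)
    have := (G.toRealLinearMap gcont).map_smul t 1
    change G (t • 1) = t • G 1 at this
    simpa [G, smul_eq_mul] using this
  -- Step 2: induction on a finset of coordinates
  have key : ∀ s : Finset (Fin p), ∀ x : Fin p → ℝ,
      f (fun i => if i ∈ s then x i else 1) = (∏ i ∈ s, x i) * f (fun _ => 1) := by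
    intro s
    induction s using Finset.induction_on with
    | empty => intro x; simp
    | @insert a s ha ih =>
      intro x
      have h1 : (fun i => if i ∈ insert a s then x i else 1)
          = Function.update (fun i => if i ∈ s then x i else 1) a (x a) := by
        funext j
        rcases eq_or_ne j a with rfl | hj
        · simp
        · simp [Function.update_of_ne hj, Finset.mem_insert, hj]
      have h2 : Function.update (fun i => if i ∈ s then x i else 1) a (1 : ℝ)
          = (fun i => if i ∈ s then x i else 1) := by
        funext j
        rcases eq_or_ne j a with rfl | hj
        · simp [ha]
        · simp [Function.update_of_ne hj]
      rw [h1, hlin _ a (x a), h2, ih x, Finset.prod_insert ha]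
      ring
  refine ⟨f (fun _ => 1), fun x => ?_⟩
  have := key Finset.univ x
  simpa [mul_comm] using this
end

section
/- Let f, g: ℝ → ℝ be additive, n, m nonzero integers with n ≠ m, and suppose either n = −m or n and m have the same sign. If there is a constant K such that |f(x^n) − x^(n−m) g(x^m)| ≤ K for all nonzero real x, then there exist derivations F, G: ℝ → ℝ with n F(x) = m G(x) for all x, f(x) = F(x) + f(1)x, and g(x) = G(x) + g(1)x for all x ∈ ℝ. -/
open Polynomial Finset

section AuxStmt9

lemma aux9_addv_zero {f : ℝ → ℝ} (hf : ∀ x y : ℝ, f (x + y) = f x + f y) : f 0 = 0 := by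
  have := hf 0 0; simpa using this

lemma aux9_addv_neg {f : ℝ → ℝ} (hf : ∀ x y : ℝ, f (x + y) = f x + f y) (x : ℝ) :
    f (-x) = - f x := by
  have h0 := aux9_addv_zero hf
  have := hf x (-x); rw [add_neg_cancel, h0] at this; linarith

lemma aux9_add_qlin {f : ℝ → ℝ} (hf : ∀ x y : ℝ, f (x + y) = f x + f y) (q : ℚ) (x : ℝ) :
    f ((q:ℝ) * x) = (q:ℝ) * f x := by
  have := map_ratCast_smul (AddMonoidHom.mk' f fun a b => hf a b) ℝ ℝ q x
  simpa [smul_eq_mul] using this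

lemma aux9_bigq (n : ℤ) (hn : n ≠ 0) (k : ℕ) :
    ∃ q : ℚ, 0 < (q:ℝ) ∧ ((k:ℝ)+1) ≤ (q:ℝ)^n := by
  rcases lt_or_gt_of_ne hn with hneg | hpos
  · refine ⟨((k:ℚ)+1)⁻¹, ?_, ?_⟩
    · push_cast; positivity
    · have h1 : (1:ℝ) ≤ (k:ℝ)+1 := by have := Nat.cast_nonneg (α:=ℝ) k; linarith
      have h2 : ((((k:ℚ)+1)⁻¹ : ℚ):ℝ) = ((k:ℝ)+1)⁻¹ := by push_cast; ring
      rw [h2, inv_zpow, ← zpow_neg]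
      calc ((k:ℝ)+1) = ((k:ℝ)+1)^(1:ℤ) := (zpow_one _).symm
        _ ≤ ((k:ℝ)+1)^(-n) := zpow_le_zpow_right₀ h1 (by omega)
  · refine ⟨(k:ℚ)+1, ?_, ?_⟩
    · push_cast; positivity
    · have h1 : (1:ℝ) ≤ (k:ℝ)+1 := by have := Nat.cast_nonneg (α:=ℝ) k; linarith
      have h2 : (((k:ℚ)+1 : ℚ):ℝ) = ((k:ℝ)+1) := by push_cast; ring
      rw [h2]
      calc ((k:ℝ)+1) = ((k:ℝ)+1)^(1:ℤ) := (zpow_one _).symm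
        _ ≤ ((k:ℝ)+1)^n := zpow_le_zpow_right₀ h1 (by omega)

lemma aux9_vanish (f g : ℝ → ℝ)
    (hf : ∀ x y : ℝ, f (x + y) = f x + f y)
    (hg : ∀ x y : ℝ, g (x + y) = g x + g y)
    (n m : ℤ) (hn : n ≠ 0) (K : ℝ)
    (hK : ∀ x : ℝ, x ≠ 0 → |f (x ^ n) - x ^ (n - m) * g (x ^ m)| ≤ K) :
    ∀ x : ℝ, x ≠ 0 → f (x ^ n) = x ^ (n - m) * g (x ^ m) := by
  intro x hx
  have key : ∀ k : ℕ, ((k:ℝ)+1) * |f (x ^ n) - x ^ (n - m) * g (x ^ m)| ≤ K := by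
    intro k
    obtain ⟨q, hq0, hqn⟩ := aux9_bigq n hn k
    have hqR : (q:ℝ) ≠ 0 := ne_of_gt hq0
    have hy : (q:ℝ) * x ≠ 0 := mul_ne_zero hqR hx
    have e1 : f (((q:ℝ)*x)^n) = (q:ℝ)^n * f (x^n) := by
      rw [mul_zpow, ← Rat.cast_zpow, aux9_add_qlin hf, Rat.cast_zpow]
    have e2 : g (((q:ℝ)*x)^m) = (q:ℝ)^m * g (x^m) := by
      rw [mul_zpow, ← Rat.cast_zpow, aux9_add_qlin hg, Rat.cast_zpow]
    have e3 : ((q:ℝ)*x)^(n-m) = (q:ℝ)^(n-m) * x^(n-m) := mul_zpow _ _ _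
    have e4 : (q:ℝ)^(n-m) * (q:ℝ)^m = (q:ℝ)^n := by
      rw [← zpow_add₀ hqR]; norm_num
    have expand : f (((q:ℝ)*x)^n) - ((q:ℝ)*x)^(n-m) * g (((q:ℝ)*x)^m)
        = (q:ℝ)^n * (f (x ^ n) - x ^ (n - m) * g (x ^ m)) := by
      rw [e1, e2, e3]
      calc (q:ℝ)^n * f (x^n) - (q:ℝ)^(n-m) * x^(n-m) * ((q:ℝ)^m * g (x^m))
          = (q:ℝ)^n * f (x^n) - ((q:ℝ)^(n-m) * (q:ℝ)^m) * (x^(n-m) * g (x^m)) := by ring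
        _ = (q:ℝ)^n * (f (x ^ n) - x ^ (n - m) * g (x ^ m)) := by rw [e4]; ring
    have hKq := hK _ hy
    rw [expand, abs_mul] at hKq
    have habs : |(q:ℝ)^n| = (q:ℝ)^n := abs_of_pos (zpow_pos hq0 n)
    rw [habs] at hKq
    calc ((k:ℝ)+1) * |f (x ^ n) - x ^ (n - m) * g (x ^ m)|
        ≤ (q:ℝ)^n * |f (x ^ n) - x ^ (n - m) * g (x ^ m)| :=
          mul_le_mul_of_nonneg_right hqn (abs_nonneg _)
      _ ≤ K := hKq
  by_contra hne
  have hz : f (x ^ n) - x ^ (n - m) * g (x ^ m) ≠ 0 := sub_ne_zero.mpr hne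
  have hpos : 0 < |f (x ^ n) - x ^ (n - m) * g (x ^ m)| := abs_pos.mpr hz
  obtain ⟨k, hk⟩ := exists_nat_gt (K / |f (x ^ n) - x ^ (n - m) * g (x ^ m)|)
  have h1 := key k
  have h2 : K / |f (x ^ n) - x ^ (n - m) * g (x ^ m)| < (k:ℝ)+1 := by linarith
  have h3 : K < ((k:ℝ)+1) * |f (x ^ n) - x ^ (n - m) * g (x ^ m)| := by
    rw [div_lt_iff₀ hpos] at h2; linarith
  linarith

lemma aux9_poly_eq_of_rat (p q : ℝ[X]) (h : ∀ r : ℚ, p.eval (r:ℝ) = q.eval (r:ℝ)) : p = q := by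
  have hsub : p - q = 0 := by
    apply Polynomial.eq_zero_of_infinite_isRoot
    have hinf : (Set.range ((↑) : ℚ → ℝ)).Infinite :=
      Set.infinite_range_of_injective Rat.cast_injective
    refine hinf.mono ?_
    rintro y ⟨r, rfl⟩
    simp [Polynomial.IsRoot, h r]
  exact sub_eq_zero.mp hsub

lemma aux9_sum_top1 (Mn Nn : ℕ) (hM : 1 ≤ Mn) (hN : 1 ≤ Nn) (u v : ℕ → ℝ)
    (hu : ∀ j, Mn < j → u j = 0) (hv : ∀ i, Nn < i → v i = 0) (hvN : v Nn = 0) :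
    ∑ j ∈ Finset.range (Nn + Mn - 1 + 1), u j * v (Nn + Mn - 1 - j) = u Mn * v (Nn - 1) := by
  rw [← Finset.sum_subset (show {Mn} ⊆ Finset.range (Nn + Mn - 1 + 1) by
      intro j hj; simp at hj; subst hj; simp; omega)]
  · rw [Finset.sum_singleton]
    congr 2
    omega
  · intro j hj hj'
    simp at hj hj'
    rcases lt_or_gt_of_ne hj' with hlt | hgt
    · have hi : Nn ≤ Nn + Mn - 1 - j := by omega
      rcases eq_or_lt_of_le hi with he | hl
      · rw [← he, hvN, mul_zero]
      · rw [hv _ hl, mul_zero]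
    · rw [hu _ hgt, zero_mul]

lemma aux9_sum_top2 (Mn Nn : ℕ) (hM : 1 ≤ Mn) (hN : 1 ≤ Nn) (u v : ℕ → ℝ)
    (hu : ∀ j, Mn < j → u j = 0) (hv : ∀ i, Nn < i → v i = 0) (hvN : v Nn = 0) :
    ∑ j ∈ Finset.range (Nn + Mn - 2 + 1), u j * v (Nn + Mn - 2 - j) =
      (if 2 ≤ Nn then u Mn * v (Nn - 2) else 0) + u (Mn - 1) * v (Nn - 1) := by
  by_cases h2 : 2 ≤ Nn
  · rw [if_pos h2]
    rw [← Finset.sum_subset (show ({Mn - 1, Mn} : Finset ℕ) ⊆ Finset.range (Nn + Mn - 2 + 1) by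
        intro j hj; simp at hj; rcases hj with rfl | rfl <;> simp <;> omega)]
    · rw [Finset.sum_pair (by omega : Mn - 1 ≠ Mn)]
      have e1 : Nn + Mn - 2 - (Mn - 1) = Nn - 1 := by omega
      have e2 : Nn + Mn - 2 - Mn = Nn - 2 := by omega
      rw [e1, e2]; ring
    · intro j hj hj'
      simp at hj hj'
      obtain ⟨hj1, hj2⟩ := hj'
      rcases Nat.lt_or_ge j Mn with hlt | hge
      · have hi : Nn ≤ Nn + Mn - 2 - j := by omega
        rcases eq_or_lt_of_le hi with he | hl
        · rw [← he, hvN, mul_zero]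
        · rw [hv _ hl, mul_zero]
      · have : Mn < j := by omega
        rw [hu _ this, zero_mul]
  · rw [if_neg h2]
    have hN1 : Nn = 1 := by omega
    rw [← Finset.sum_subset (show ({Mn - 1} : Finset ℕ) ⊆ Finset.range (Nn + Mn - 2 + 1) by
        intro j hj; simp at hj; subst hj; simp; omega)]
    · rw [Finset.sum_singleton]
      have e1 : Nn + Mn - 2 - (Mn - 1) = Nn - 1 := by omega
      rw [e1]; ring
    · intro j hj hj'
      simp at hj hj'
      have hlt : j < Mn - 1 := by omega
      have hi : Nn ≤ Nn + Mn - 2 - j := by omega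
      rcases eq_or_lt_of_le hi with he | hl
      · rw [← he, hvN, mul_zero]
      · rw [hv _ hl, mul_zero]

lemma aux9_two_choose_two (n : ℕ) : 2 * n.choose 2 = n * (n-1) := by
  induction n with
  | zero => rfl
  | succ k ih =>
    rw [Nat.choose_succ_succ, Nat.choose_one_right]
    cases k with
    | zero => rfl
    | succ j =>
      show 2 * ((j+1) + (j+1).choose 2) = (j + 1 + 1) * (j + 1 + 1 - 1)
      simp only [Nat.succ_sub_one] at ih ⊢
      nlinarith [ih]

lemma aux9_expandF {F : ℝ → ℝ} (hF : ∀ x y : ℝ, F (x + y) = F x + F y) (N : ℕ) (x : ℝ) (q : ℚ) :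
    F (((q:ℝ) + x)^N) = ∑ k ∈ Finset.range (N+1),
      ((N.choose k : ℝ) * F (x^(N-k))) * (q:ℝ)^k := by
  have hbin : ((q:ℝ) + x)^N
      = ∑ k ∈ Finset.range (N+1), ((q^k * (N.choose k) : ℚ):ℝ) * x^(N-k) := by
    rw [add_pow]
    refine Finset.sum_congr rfl fun k hk => ?_
    push_cast; ring
  rw [hbin]
  rw [show F (∑ k ∈ Finset.range (N+1), ((q^k * (N.choose k) : ℚ):ℝ) * x^(N-k))
      = ∑ k ∈ Finset.range (N+1), F (((q^k * (N.choose k) : ℚ):ℝ) * x^(N-k)) from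
    map_sum (AddMonoidHom.mk' F fun a b => hF a b) _ _]
  refine Finset.sum_congr rfl fun k hk => ?_
  rw [aux9_add_qlin hF]
  push_cast; ring

end AuxStmt9

/-- The two key coefficient identities from the polynomial equation. -/
lemma aux9_coeff_ids (F G : ℝ → ℝ)
    (hF : ∀ x y : ℝ, F (x + y) = F x + F y)
    (hG : ∀ x y : ℝ, G (x + y) = G x + G y)
    (hF1 : F 1 = 0) (hG1 : G 1 = 0)
    (Nn Mn : ℕ) (hM : 1 ≤ Mn) (hN : 1 ≤ Nn)
    (hE : ∀ t : ℝ, t^Mn * F (t^Nn) = t^Nn * G (t^Mn)) (x : ℝ) :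
    (Nn:ℝ) * F x = (Mn:ℝ) * G x ∧
    (Nn.choose 2 : ℝ) * F (x^2) + ((Mn:ℝ)*x) * ((Nn:ℝ) * F x)
      = (Mn.choose 2 : ℝ) * G (x^2) + ((Nn:ℝ)*x) * ((Mn:ℝ) * G x) := by
  classical
  set pF : ℝ[X] := ∑ k ∈ Finset.range (Nn+1),
      Polynomial.monomial k ((Nn.choose k : ℝ) * F (x^(Nn-k))) with hpF
  set pG : ℝ[X] := ∑ k ∈ Finset.range (Mn+1),
      Polynomial.monomial k ((Mn.choose k : ℝ) * G (x^(Mn-k))) with hpG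
  have evalF : ∀ r : ℝ, pF.eval r
      = ∑ k ∈ Finset.range (Nn+1), ((Nn.choose k : ℝ) * F (x^(Nn-k))) * r^k := by
    intro r; rw [hpF, Polynomial.eval_finset_sum]
    exact Finset.sum_congr rfl fun k _ => Polynomial.eval_monomial
  have evalG : ∀ r : ℝ, pG.eval r
      = ∑ k ∈ Finset.range (Mn+1), ((Mn.choose k : ℝ) * G (x^(Mn-k))) * r^k := by
    intro r; rw [hpG, Polynomial.eval_finset_sum]
    exact Finset.sum_congr rfl fun k _ => Polynomial.eval_monomial
  have coeffF : ∀ i, pF.coeff i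
      = if i ≤ Nn then (Nn.choose i : ℝ) * F (x^(Nn-i)) else 0 := by
    intro i
    rw [hpF, Polynomial.finset_sum_coeff]
    simp only [Polynomial.coeff_monomial]
    rw [Finset.sum_ite_eq' (Finset.range (Nn+1)) i]
    simp [Nat.lt_succ_iff]
  have coeffG : ∀ i, pG.coeff i
      = if i ≤ Mn then (Mn.choose i : ℝ) * G (x^(Mn-i)) else 0 := by
    intro i
    rw [hpG, Polynomial.finset_sum_coeff]
    simp only [Polynomial.coeff_monomial]
    rw [Finset.sum_ite_eq' (Finset.range (Mn+1)) i]
    simp [Nat.lt_succ_iff]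
  have hpoly : (X + C x)^Mn * pF = (X + C x)^Nn * pG := by
    apply aux9_poly_eq_of_rat
    intro q
    rw [Polynomial.eval_mul, Polynomial.eval_mul, Polynomial.eval_pow, Polynomial.eval_pow,
      Polynomial.eval_add, Polynomial.eval_X, Polynomial.eval_C, evalF, evalG,
      ← aux9_expandF hF, ← aux9_expandF hG]
    exact hE ((q:ℝ) + x)
  -- coefficient extraction machinery
  have coeffL : ∀ d : ℕ, ((X + C x)^Mn * pF).coeff d
      = ∑ j ∈ Finset.range (d+1), ((X + C x : ℝ[X])^Mn).coeff j * pF.coeff (d - j) := by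
    intro d
    rw [Polynomial.coeff_mul, Finset.Nat.sum_antidiagonal_eq_sum_range_succ_mk]
  have coeffR : ∀ d : ℕ, ((X + C x)^Nn * pG).coeff d
      = ∑ j ∈ Finset.range (d+1), ((X + C x : ℝ[X])^Nn).coeff j * pG.coeff (d - j) := by
    intro d
    rw [Polynomial.coeff_mul, Finset.Nat.sum_antidiagonal_eq_sum_range_succ_mk]
  have huM : ∀ j, Mn < j → ((X + C x : ℝ[X])^Mn).coeff j = 0 := by
    intro j hj; rw [Polynomial.coeff_X_add_C_pow, Nat.choose_eq_zero_of_lt hj]; simp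
  have huN : ∀ j, Nn < j → ((X + C x : ℝ[X])^Nn).coeff j = 0 := by
    intro j hj; rw [Polynomial.coeff_X_add_C_pow, Nat.choose_eq_zero_of_lt hj]; simp
  have hvF : ∀ i, Nn < i → pF.coeff i = 0 := by
    intro i hi; rw [coeffF, if_neg (by omega)]
  have hvG : ∀ i, Mn < i → pG.coeff i = 0 := by
    intro i hi; rw [coeffG, if_neg (by omega)]
  have hvFN : pF.coeff Nn = 0 := by
    rw [coeffF, if_pos le_rfl, Nat.sub_self, pow_zero, hF1]; ring
  have hvGM : pG.coeff Mn = 0 := by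
    rw [coeffG, if_pos le_rfl, Nat.sub_self, pow_zero, hG1]; ring
  -- values
  have uMM : ((X + C x : ℝ[X])^Mn).coeff Mn = 1 := by
    rw [Polynomial.coeff_X_add_C_pow, Nat.sub_self, Nat.choose_self]; simp
  have uNN : ((X + C x : ℝ[X])^Nn).coeff Nn = 1 := by
    rw [Polynomial.coeff_X_add_C_pow, Nat.sub_self, Nat.choose_self]; simp
  have uMM1 : ((X + C x : ℝ[X])^Mn).coeff (Mn - 1) = (Mn:ℝ) * x := by
    rw [Polynomial.coeff_X_add_C_pow, show Mn - (Mn - 1) = 1 by omega,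
      Nat.choose_symm hM, Nat.choose_one_right]
    ring
  have uNN1 : ((X + C x : ℝ[X])^Nn).coeff (Nn - 1) = (Nn:ℝ) * x := by
    rw [Polynomial.coeff_X_add_C_pow, show Nn - (Nn - 1) = 1 by omega,
      Nat.choose_symm hN, Nat.choose_one_right]
    ring
  have vFN1 : pF.coeff (Nn - 1) = (Nn:ℝ) * F x := by
    rw [coeffF, if_pos (by omega), show Nn - (Nn - 1) = 1 by omega,
      Nat.choose_symm hN, Nat.choose_one_right, pow_one]
  have vGM1 : pG.coeff (Mn - 1) = (Mn:ℝ) * G x := by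
    rw [coeffG, if_pos (by omega), show Mn - (Mn - 1) = 1 by omega,
      Nat.choose_symm hM, Nat.choose_one_right, pow_one]
  constructor
  · -- first identity, coefficient at Nn+Mn-1
    have hL := coeffL (Nn + Mn - 1)
    have hR := coeffR (Nn + Mn - 1)
    rw [aux9_sum_top1 Mn Nn hM hN _ _ huM hvF hvFN] at hL
    rw [show Nn + Mn - 1 = Mn + Nn - 1 by omega] at hR
    rw [aux9_sum_top1 Nn Mn hN hM _ _ huN hvG hvGM] at hR
    have hcc := congrArg (fun p => Polynomial.coeff p (Nn + Mn - 1)) hpoly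
    rw [hL] at hcc
    rw [Nat.add_comm Nn Mn] at hcc
    rw [hR, uMM, uNN, vFN1, vGM1] at hcc
    simpa using hcc
  · -- second identity, coefficient at Nn+Mn-2
    have hL := coeffL (Nn + Mn - 2)
    have hR := coeffR (Nn + Mn - 2)
    rw [aux9_sum_top2 Mn Nn hM hN _ _ huM hvF hvFN] at hL
    rw [show Nn + Mn - 2 = Mn + Nn - 2 by omega] at hR
    rw [aux9_sum_top2 Nn Mn hN hM _ _ huN hvG hvGM] at hR
    have hifF : (if 2 ≤ Nn then ((X + C x : ℝ[X])^Mn).coeff Mn * pF.coeff (Nn - 2) else 0)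
        = (Nn.choose 2 : ℝ) * F (x^2) := by
      by_cases h2 : 2 ≤ Nn
      · rw [if_pos h2, uMM, coeffF, if_pos (by omega), show Nn - (Nn - 2) = 2 by omega,
          Nat.choose_symm h2]
        ring
      · rw [if_neg h2, Nat.choose_eq_zero_of_lt (by omega)]
        simp
    have hifG : (if 2 ≤ Mn then ((X + C x : ℝ[X])^Nn).coeff Nn * pG.coeff (Mn - 2) else 0)
        = (Mn.choose 2 : ℝ) * G (x^2) := by
      by_cases h2 : 2 ≤ Mn
      · rw [if_pos h2, uNN, coeffG, if_pos (by omega), show Mn - (Mn - 2) = 2 by omega,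
          Nat.choose_symm h2]
        ring
      · rw [if_neg h2, Nat.choose_eq_zero_of_lt (by omega)]
        simp
    rw [hifF, uMM1, vFN1] at hL
    rw [hifG, uNN1, vGM1] at hR
    have hcc := congrArg (fun p => Polynomial.coeff p (Nn + Mn - 2)) hpoly
    rw [hL] at hcc
    rw [Nat.add_comm Nn Mn] at hcc
    rw [hR] at hcc
    exact hcc

lemma aux9_deriv_of_sq {F : ℝ → ℝ} (hF : ∀ x y : ℝ, F (x + y) = F x + F y)
    (hsq : ∀ x : ℝ, F (x*x) = 2*x*F x) : ∀ x y : ℝ, F (x*y) = x*F y + y*F x := by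
  intro x y
  have h1 := hsq (x+y)
  have h2 : (x+y)*(x+y) = x*x + (x*y + (x*y + y*y)) := by ring
  rw [h2, hF, hF, hF, hsq x, hsq y, hF x y] at h1
  linear_combination h1/2

lemma aux9_pos_case (F G : ℝ → ℝ)
    (hF : ∀ x y : ℝ, F (x + y) = F x + F y)
    (hG : ∀ x y : ℝ, G (x + y) = G x + G y)
    (hF1 : F 1 = 0) (hG1 : G 1 = 0)
    (Nn Mn : ℕ) (hM : 1 ≤ Mn) (hN : 1 ≤ Nn) (hMN : Mn ≠ Nn)
    (hE : ∀ t : ℝ, t^Mn * F (t^Nn) = t^Nn * G (t^Mn)) :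
    (∀ x : ℝ, (Nn:ℝ) * F x = (Mn:ℝ) * G x) ∧
    (∀ x y : ℝ, F (x*y) = x * F y + y * F x) ∧
    (∀ x y : ℝ, G (x*y) = x * G y + y * G x) := by
  have key := fun x => aux9_coeff_ids F G hF hG hF1 hG1 Nn Mn hM hN hE x
  have h1 : ∀ x : ℝ, (Nn:ℝ) * F x = (Mn:ℝ) * G x := fun x => (key x).1
  have hNR : (Nn:ℝ) ≠ 0 := Nat.cast_ne_zero.mpr (by omega)
  have hMR : (Mn:ℝ) ≠ 0 := Nat.cast_ne_zero.mpr (by omega)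
  have hNMR : (Nn:ℝ) ≠ (Mn:ℝ) := fun hc => hMN (Nat.cast_injective hc).symm
  have hCN : 2 * ((Nn.choose 2 : ℕ):ℝ) = (Nn:ℝ)*((Nn:ℝ)-1) := by
    have h := aux9_two_choose_two Nn
    have h' : ((2 * Nn.choose 2 : ℕ):ℝ) = ((Nn*(Nn-1) : ℕ):ℝ) := by exact congrArg (fun t => ((t:ℕ):ℝ)) h
    push_cast [Nat.cast_sub hN] at h'
    linarith
  have hCM : 2 * ((Mn.choose 2 : ℕ):ℝ) = (Mn:ℝ)*((Mn:ℝ)-1) := by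
    have h := aux9_two_choose_two Mn
    have h' : ((2 * Mn.choose 2 : ℕ):ℝ) = ((Mn*(Mn-1) : ℕ):ℝ) := by exact congrArg (fun t => ((t:ℕ):ℝ)) h
    push_cast [Nat.cast_sub hM] at h'
    linarith
  have hsqF : ∀ x : ℝ, F (x*x) = 2*x*F x := by
    intro x
    have h2 := (key x).2
    have hc1 : (Nn:ℝ) * F (x^2) = (Mn:ℝ) * G (x^2) := h1 (x^2)
    have hc2 := h1 x
    have hfac : (Nn:ℝ) * (Mn:ℝ) * ((Nn:ℝ) - (Mn:ℝ)) ≠ 0 := by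
      apply mul_ne_zero (mul_ne_zero hNR hMR) (sub_ne_zero.mpr hNMR)
    have hgoal : (Nn:ℝ) * (Mn:ℝ) * ((Nn:ℝ) - (Mn:ℝ)) * F (x^2)
        = (Nn:ℝ) * (Mn:ℝ) * ((Nn:ℝ) - (Mn:ℝ)) * (2*x*F x) := by
      linear_combination (2*(Mn:ℝ)) * h2 + (-((Mn:ℝ)*((Mn:ℝ)-1))) * hc1
        + (-(2*(Nn:ℝ)*(Mn:ℝ)*x)) * hc2 + (-((Mn:ℝ) * F (x^2))) * hCN
        + ((Mn:ℝ) * G (x^2)) * hCM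
    have := mul_left_cancel₀ hfac hgoal
    rw [pow_two] at this
    exact this
  have hderF := aux9_deriv_of_sq hF hsqF
  refine ⟨h1, hderF, ?_⟩
  intro x y
  have hc : (Mn:ℝ) * G (x*y) = (Mn:ℝ) * (x * G y + y * G x) := by
    rw [← h1 (x*y), hderF x y]
    have e1 := h1 x
    have e2 := h1 y
    ring_nf
    linear_combination x * e2 + y * e1
  exact mul_left_cancel₀ hMR hc

lemma aux9_inv_case (F G : ℝ → ℝ)
    (hF : ∀ x y : ℝ, F (x + y) = F x + F y)
    (hG : ∀ x y : ℝ, G (x + y) = G x + G y)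
    (hG1 : G 1 = 0) (Mn : ℕ) (hM : 1 ≤ Mn)
    (hE : ∀ x : ℝ, x ≠ 0 → F (x ^ (-(Mn:ℤ))) = x ^ (-(2*(Mn:ℤ))) * G (x ^ (Mn:ℤ))) :
    (∀ x : ℝ, F x = - G x) ∧ (∀ x y : ℝ, G (x*y) = x * G y + y * G x) := by
  have hpos : ∀ t : ℝ, 0 < t → F t⁻¹ = (t*t)⁻¹ * G t := by
    intro t ht
    set y := t ^ ((Mn:ℝ)⁻¹) with hy
    have hy0 : 0 < y := Real.rpow_pos_of_pos ht _
    have hyM : y ^ (Mn:ℕ) = t := Real.rpow_inv_natCast_pow (le_of_lt ht) (by omega)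
    have hyMz : y ^ (Mn:ℤ) = t := by rw [zpow_natCast, hyM]
    have h1 := hE y (ne_of_gt hy0)
    have e1 : y ^ (-(Mn:ℤ)) = t⁻¹ := by rw [zpow_neg, hyMz]
    have e2 : y ^ (-(2*(Mn:ℤ))) = (t*t)⁻¹ := by
      have : (-(2*(Mn:ℤ))) = (Mn:ℤ) * (-2) := by ring
      rw [this, zpow_mul, hyMz, zpow_neg, zpow_two]
    rw [e1, e2, hyMz] at h1
    exact h1
  have hall : ∀ t : ℝ, t ≠ 0 → F t⁻¹ = (t*t)⁻¹ * G t := by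
    intro t ht
    rcases lt_or_gt_of_ne ht with hlt | hgt
    · have hs : 0 < -t := by linarith
      have h2 := hpos (-t) hs
      rw [inv_neg, aux9_addv_neg hF, aux9_addv_neg hG, neg_mul_neg] at h2
      linear_combination -h2
    · exact hpos t hgt
  have hsqG : ∀ x : ℝ, G (x*x) = 2*x*G x := by
    intro x
    by_cases hx0 : x = 0
    · subst hx0; simpa using aux9_addv_zero hG
    by_cases hx1 : x = -1
    · subst hx1
      rw [show (-1:ℝ)*(-1) = 1 by ring, hG1, aux9_addv_neg hG]
      rw [hG1]; ring
    have hx1' : x + 1 ≠ 0 := fun hc => hx1 (by linarith)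
    have hxx : x * (x+1) ≠ 0 := mul_ne_zero hx0 hx1'
    have hid : x⁻¹ = (x+1)⁻¹ + (x*(x+1))⁻¹ := by field_simp
    have hFid : F x⁻¹ = F (x+1)⁻¹ + F (x*(x+1))⁻¹ := by rw [hid, hF]
    rw [hall x hx0, hall (x+1) hx1', hall _ hxx] at hFid
    have eG1 : G (x+1) = G x := by rw [hG x 1, hG1, add_zero]
    have eG2 : G (x*(x+1)) = G (x*x) + G x := by
      rw [show x*(x+1) = x*x + x by ring, hG]
    rw [eG1, eG2] at hFid
    have hclear : (x*x) * ((x+1)*(x+1)) * ((x*(x+1))*(x*(x+1))) ≠ 0 := by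
      apply mul_ne_zero (mul_ne_zero (mul_ne_zero hx0 hx0) (mul_ne_zero hx1' hx1'))
        (mul_ne_zero hxx hxx)
    field_simp at hFid
    have hcl : (x*x) * ((x+1)*(x+1)) ≠ 0 :=
      mul_ne_zero (mul_ne_zero hx0 hx0) (mul_ne_zero hx1' hx1')
    apply mul_left_cancel₀ hcl
    rw [show x^2 = x*x by ring] at hFid
    linear_combination (-(x*x*((x+1)*(x+1)))) * hFid
  have hderG := aux9_deriv_of_sq hG hsqG
  refine ⟨?_, hderG⟩
  intro s
  by_cases hs : s = 0
  · subst hs; rw [aux9_addv_zero hF, aux9_addv_zero hG]; ring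
  · have h1 := hall s⁻¹ (inv_ne_zero hs)
    rw [inv_inv] at h1
    have hGinv : G s⁻¹ = -(s⁻¹ * s⁻¹ * G s) := by
      have h0 : G (s * s⁻¹) = s * G s⁻¹ + s⁻¹ * G s := hderG s s⁻¹
      rw [mul_inv_cancel₀ hs, hG1] at h0
      apply mul_left_cancel₀ hs
      rw [show s * -(s⁻¹*s⁻¹*G s) = -((s*s⁻¹)*(s⁻¹*G s)) by ring, mul_inv_cancel₀ hs]
      linear_combination -h0
    rw [hGinv] at h1
    rw [h1, show (s⁻¹*s⁻¹)⁻¹ = s*s by rw [mul_inv, inv_inv],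
      show (s*s) * -(s⁻¹*s⁻¹*G s) = -((s*s⁻¹)*((s*s⁻¹)*G s)) by ring, mul_inv_cancel₀ hs]
    ring

lemma aux9_invert_eq (F G : ℝ → ℝ) (n m : ℤ)
    (hE : ∀ x : ℝ, x ≠ 0 → F (x^n) = x^(n-m) * G (x^m)) :
    ∀ x : ℝ, x ≠ 0 → F (x^(-n)) = x^(-n - -m) * G (x^(-m)) := by
  intro x hx
  have h := hE x⁻¹ (inv_ne_zero hx)
  rw [inv_zpow, inv_zpow, inv_zpow, ← zpow_neg, ← zpow_neg, ← zpow_neg] at h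
  rw [show -n - -m = -(n-m) by ring]
  exact h

lemma aux9_zpos_case (F G : ℝ → ℝ)
    (hF : ∀ x y : ℝ, F (x + y) = F x + F y)
    (hG : ∀ x y : ℝ, G (x + y) = G x + G y)
    (hF1 : F 1 = 0) (hG1 : G 1 = 0)
    (n' m' : ℤ) (h0n : 0 < n') (h0m : 0 < m') (hne : n' ≠ m')
    (hE : ∀ x : ℝ, x ≠ 0 → F (x^n') = x^(n'-m') * G (x^m')) :
    (∀ x : ℝ, ((n':ℤ):ℝ) * F x = ((m':ℤ):ℝ) * G x) ∧
    (∀ x y : ℝ, F (x*y) = x * F y + y * F x) ∧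
    (∀ x y : ℝ, G (x*y) = x * G y + y * G x) := by
  set Nn := n'.toNat with hNdef
  set Mn := m'.toNat with hMdef
  have hNn : (Nn:ℤ) = n' := Int.toNat_of_nonneg h0n.le
  have hMn : (Mn:ℤ) = m' := Int.toNat_of_nonneg h0m.le
  have hM1 : 1 ≤ Mn := by omega
  have hN1 : 1 ≤ Nn := by omega
  have hMN : Mn ≠ Nn := by omega
  have hEnat : ∀ t : ℝ, t^Mn * F (t^Nn) = t^Nn * G (t^Mn) := by
    intro t
    by_cases ht : t = 0
    · subst ht
      rw [zero_pow (by omega : Mn ≠ 0), zero_pow (by omega : Nn ≠ 0), zero_mul, zero_mul]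
    · have h := hE t ht
      have e1 : t ^ (m':ℤ) * t ^ (n'-m') = t ^ (n':ℤ) := by
        rw [← zpow_add₀ ht, show m' + (n'-m') = n' by ring]
      calc t^Mn * F (t^Nn) = t^((Mn:ℤ)) * F (t^((Nn:ℤ))) := by
            rw [zpow_natCast, zpow_natCast]
        _ = t^(m':ℤ) * F (t^(n':ℤ)) := by rw [hMn, hNn]
        _ = t^(m':ℤ) * (t^(n'-m') * G (t^(m':ℤ))) := by rw [h]
        _ = (t^(m':ℤ) * t^(n'-m')) * G (t^(m':ℤ)) := by ring
        _ = t^(n':ℤ) * G (t^(m':ℤ)) := by rw [e1]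
        _ = t^((Nn:ℤ)) * G (t^((Mn:ℤ))) := by rw [hMn, hNn]
        _ = t^Nn * G (t^Mn) := by rw [zpow_natCast, zpow_natCast]
  obtain ⟨ha, hb, hc⟩ := aux9_pos_case F G hF hG hF1 hG1 Nn Mn hM1 hN1 hMN hEnat
  refine ⟨?_, hb, hc⟩
  intro x
  have h := ha x
  have c1 : ((Nn:ℕ):ℝ) = ((n':ℤ):ℝ) := by exact_mod_cast congrArg (fun t : ℤ => (t:ℝ)) hNn
  have c2 : ((Mn:ℕ):ℝ) = ((m':ℤ):ℝ) := by exact_mod_cast congrArg (fun t : ℤ => (t:ℝ)) hMn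
  rw [c1, c2] at h
  exact h

theorem stmt_9 (f g : ℝ → ℝ)
    (hf : ∀ x y : ℝ, f (x + y) = f x + f y)
    (hg : ∀ x y : ℝ, g (x + y) = g x + g y)
    (n m : ℤ) (hn : n ≠ 0) (hm : m ≠ 0) (hnm : n ≠ m)
    (hsign : n = -m ∨ (0 < n ∧ 0 < m) ∨ (n < 0 ∧ m < 0))
    (K : ℝ) (hK : ∀ x : ℝ, x ≠ 0 → |f (x ^ n) - x ^ (n - m) * g (x ^ m)| ≤ K) :
    ∃ F G : ℝ → ℝ,
      (∀ x y : ℝ, F (x + y) = F x + F y) ∧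
      (∀ x y : ℝ, F (x * y) = x * F y + y * F x) ∧
      (∀ x y : ℝ, G (x + y) = G x + G y) ∧
      (∀ x y : ℝ, G (x * y) = x * G y + y * G x) ∧
      (∀ x : ℝ, (n : ℝ) * F x = (m : ℝ) * G x) ∧
      (∀ x : ℝ, f x = F x + f 1 * x) ∧
      (∀ x : ℝ, g x = G x + g 1 * x) := by
  have E := aux9_vanish f g hf hg n m hn K hK
  have hfg1 : f 1 = g 1 := by
    have h := E 1 one_ne_zero
    rwa [one_zpow, one_zpow, one_zpow, one_mul] at h
  set F : ℝ → ℝ := fun x => f x - f 1 * x with hFdef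
  set G : ℝ → ℝ := fun x => g x - g 1 * x with hGdef
  have hFadd : ∀ x y : ℝ, F (x + y) = F x + F y := by
    intro x y; simp only [hFdef, hf]; ring
  have hGadd : ∀ x y : ℝ, G (x + y) = G x + G y := by
    intro x y; simp only [hGdef, hg]; ring
  have hF1 : F 1 = 0 := by simp [hFdef]
  have hG1 : G 1 = 0 := by simp [hGdef]
  have hE' : ∀ x : ℝ, x ≠ 0 → F (x^n) = x^(n-m) * G (x^m) := by
    intro x hx
    have hz : x^(n-m) * x^m = x^n := by
      rw [← zpow_add₀ hx, show n-m+m = n by ring]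
    show f (x^n) - f 1 * x^n = x^(n-m) * (g (x^m) - g 1 * x^m)
    rw [E x hx, hfg1]
    linear_combination (g 1) * hz
  have main : (∀ x : ℝ, (n : ℝ) * F x = (m : ℝ) * G x) ∧
      (∀ x y : ℝ, F (x * y) = x * F y + y * F x) ∧
      (∀ x y : ℝ, G (x * y) = x * G y + y * G x) := by
    rcases hsign with hcase | ⟨h0n, h0m⟩ | ⟨h0n, h0m⟩
    · -- n = -m
      have hinv : (∀ x : ℝ, F x = - G x) ∧ (∀ x y : ℝ, G (x*y) = x * G y + y * G x) := by
        rcases lt_or_gt_of_ne hm with hmneg | hmpos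
        · -- m < 0, n = -m > 0 : invert first
          set Mn := n.toNat with hMdef
          have hMn : (Mn:ℤ) = n := Int.toNat_of_nonneg (by omega)
          have hEinv := aux9_invert_eq F G n m hE'
          have hEC : ∀ x : ℝ, x ≠ 0 →
              F (x ^ (-(Mn:ℤ))) = x ^ (-(2*(Mn:ℤ))) * G (x ^ (Mn:ℤ)) := by
            intro x hx
            have h := hEinv x hx
            rw [show -n - -m = -(2*(Mn:ℤ)) by omega, show -n = -(Mn:ℤ) by omega,
              show -m = (Mn:ℤ) by omega] at h
            exact h
          exact aux9_inv_case F G hFadd hGadd hG1 Mn (by omega) hEC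
        · -- m > 0, n = -m < 0
          set Mn := m.toNat with hMdef
          have hMn : (Mn:ℤ) = m := Int.toNat_of_nonneg (by omega)
          have hEC : ∀ x : ℝ, x ≠ 0 →
              F (x ^ (-(Mn:ℤ))) = x ^ (-(2*(Mn:ℤ))) * G (x ^ (Mn:ℤ)) := by
            intro x hx
            have h := hE' x hx
            rw [show n - m = -(2*(Mn:ℤ)) by omega, show n = -(Mn:ℤ) by omega,
              show m = (Mn:ℤ) by omega] at h
            exact h
          exact aux9_inv_case F G hFadd hGadd hG1 Mn (by omega) hEC
      obtain ⟨hFG, hGder⟩ := hinv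
      refine ⟨?_, ?_, hGder⟩
      · intro x
        rw [hFG x]
        have hc : (n:ℝ) = -(m:ℝ) := by exact_mod_cast congrArg (fun t : ℤ => (t:ℝ)) hcase
        rw [hc]; ring
      · intro x y
        rw [hFG (x*y), hFG x, hFG y, hGder x y]; ring
    · -- both positive
      obtain ⟨ha, hb, hc⟩ := aux9_zpos_case F G hFadd hGadd hF1 hG1 n m h0n h0m hnm hE'
      exact ⟨ha, hb, hc⟩
    · -- both negative
      have hEinv := aux9_invert_eq F G n m hE'
      obtain ⟨ha, hb, hc⟩ := aux9_zpos_case F G hFadd hGadd hF1 hG1 (-n) (-m)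
        (by omega) (by omega) (by omega) hEinv
      refine ⟨?_, hb, hc⟩
      intro x
      have h := ha x
      push_cast at h ⊢
      linarith
  obtain ⟨h5, h2, h4⟩ := main
  refine ⟨F, G, hFadd, h2, hGadd, h4, h5, ?_, ?_⟩
  · intro x; simp only [hFdef]; ring
  · intro x; simp only [hGdef]; ring
end

section
/- Let f: ℝ → ℝ be additive and suppose |f(x^n) − x^(n−m) g(x^m)| ≤ K for all nonzero x, where g is additive. Then there is a constant L (depending on K and a fixed nondegenerate interval) such that |f(x^n) − x^(n−m) g(x^m)| ≤ L·|x|^n for all nonzero x. (Upgrade from uniform bound to homogeneous bound using ℚ-homogeneity of additive functions.) -/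
lemma additive_rat_mul (f : ℝ → ℝ) (hf : ∀ x y : ℝ, f (x + y) = f x + f y)
    (q : ℚ) (y : ℝ) : f ((q : ℝ) * y) = (q : ℝ) * f y := by
  have := map_ratCast_smul (AddMonoidHom.mk' f hf) ℝ ℝ q y
  simpa [smul_eq_mul] using this

theorem stmt_10 (f g : ℝ → ℝ)
    (hf : ∀ x y : ℝ, f (x + y) = f x + f y)
    (hg : ∀ x y : ℝ, g (x + y) = g x + g y)
    (n m : ℤ) (hn : n ≠ 0) (hm : m ≠ 0)
    (K : ℝ) (hK : ∀ x : ℝ, x ≠ 0 → |f (x ^ n) - x ^ (n - m) * g (x ^ m)| ≤ K) :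
    ∃ L : ℝ, ∀ x : ℝ, x ≠ 0 → |f (x ^ n) - x ^ (n - m) * g (x ^ m)| ≤ L * |x| ^ n := by
  have hK0 : 0 ≤ K := le_trans (abs_nonneg _) (hK 1 one_ne_zero)
  refine ⟨K * 2 ^ n.natAbs, fun x hx => ?_⟩
  have hxpos : (0 : ℝ) < |x| := abs_pos.mpr hx
  obtain ⟨q, hq1, hq2⟩ := exists_rat_btwn (show (1 : ℝ) / |x| < 2 / |x| by
    rw [div_lt_div_iff₀ hxpos hxpos]; nlinarith)
  have hqpos : (0 : ℝ) < (q : ℝ) := lt_trans (by positivity) hq1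
  have h1 : 1 < (q : ℝ) * |x| := by
    rw [div_lt_iff₀ hxpos] at hq1; linarith
  have h2 : (q : ℝ) * |x| < 2 := by
    rw [lt_div_iff₀ hxpos] at hq2; linarith
  set t : ℝ := (q : ℝ) * |x| with ht
  have htpos : 0 < t := by linarith
  have hqne : (q : ℝ) ≠ 0 := hqpos.ne'
  set y : ℝ := (q : ℝ) * x with hy
  have hyne : y ≠ 0 := mul_ne_zero hqne hx
  -- homogeneity of f and g at rational powers of q
  have hfq : f (y ^ n) = (q : ℝ) ^ n * f (x ^ n) := by
    have : y ^ n = ((q ^ n : ℚ) : ℝ) * x ^ n := by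
      rw [hy, mul_zpow]; push_cast; ring
    rw [this, additive_rat_mul f hf (q ^ n) (x ^ n)]; push_cast; ring
  have hgq : g (y ^ m) = (q : ℝ) ^ m * g (x ^ m) := by
    have : y ^ m = ((q ^ m : ℚ) : ℝ) * x ^ m := by
      rw [hy, mul_zpow]; push_cast; ring
    rw [this, additive_rat_mul g hg (q ^ m) (x ^ m)]; push_cast; ring
  have hkey : f (y ^ n) - y ^ (n - m) * g (y ^ m)
      = (q : ℝ) ^ n * (f (x ^ n) - x ^ (n - m) * g (x ^ m)) := by
    rw [hfq, hgq, hy, mul_zpow]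
    have : (q : ℝ) ^ (n - m) * (q : ℝ) ^ m = (q : ℝ) ^ n := by
      rw [← zpow_add₀ hqne]; ring_nf
    linear_combination (-(x ^ (n - m) * g (x ^ m))) * this
  have hbound := hK y hyne
  rw [hkey, abs_mul, abs_of_pos (zpow_pos hqpos n)] at hbound
  -- now |F x| * q^n ≤ K
  set F : ℝ := |f (x ^ n) - x ^ (n - m) * g (x ^ m)| with hF
  have hqn_pos : 0 < (q : ℝ) ^ n := zpow_pos hqpos n
  have hq_eq : (q : ℝ) ^ n = t ^ n / |x| ^ n := by
    rw [ht, mul_zpow]; field_simp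
  -- bound t ^ (-n) ≤ 2 ^ n.natAbs
  have hxn_pos : (0 : ℝ) < |x| ^ n := zpow_pos hxpos n
  have htn : (2 : ℝ) ^ n.natAbs * t ^ n ≥ 1 := by
    rcases Int.natAbs_eq n with hcase | hcase
    · -- n = natAbs n ≥ 0
      set k := n.natAbs
      rw [hcase, zpow_natCast]
      have h1k : (1 : ℝ) ≤ t ^ k := one_le_pow₀ (by linarith)
      have h2k : (1 : ℝ) ≤ 2 ^ k := one_le_pow₀ (by norm_num)
      nlinarith
    · set k := n.natAbs
      rw [hcase, zpow_neg, zpow_natCast]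
      have htk : t ^ k ≤ 2 ^ k := pow_le_pow_left₀ htpos.le (by linarith) k
      have htk' : (0 : ℝ) < t ^ k := pow_pos htpos k
      rw [ge_iff_le, ← div_le_iff₀ (by positivity), one_div, inv_inv]
      calc t ^ k ≤ 2 ^ k := htk
        _ ≤ 2 ^ k := le_refl _
  -- conclude
  have hFnn : 0 ≤ F := abs_nonneg _
  have step : F ≤ K / (q : ℝ) ^ n := by
    rw [le_div_iff₀ hqn_pos]; linarith [mul_comm F ((q:ℝ)^n)]
  have step2 : K / (q : ℝ) ^ n ≤ K * 2 ^ n.natAbs * |x| ^ n := by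
    rw [hq_eq, div_div_eq_mul_div, div_le_iff₀ (by positivity)]
    have htn_pos : (0 : ℝ) < t ^ n := zpow_pos htpos n
    nlinarith [mul_nonneg hK0 hxn_pos.le, mul_nonneg (mul_nonneg hK0 hxn_pos.le) htn_pos.le]
  linarith
end

section
/- Let f: ℝ → ℝ be additive, κ ∈ ℝ, and n, m ∈ ℤ \ {0, 1} with n ≠ m. If there is K ∈ ℝ such that |f(x^n) − κ x^(n−m) f(x^m)| ≤ K for all nonzero real x, then there exists a derivation F: ℝ → ℝ with (n − κ m) F(x) = 0 for all x and f(x) = F(x) + f(1)x for all x ∈ ℝ. -/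
section AuxStmt11

private lemma aux_ratmul (f : ℝ → ℝ) (hf : ∀ x y : ℝ, f (x + y) = f x + f y) :
    ∀ (q : ℚ) (x : ℝ), f ((q : ℝ) * x) = (q : ℝ) * f x := by
  intro q x
  have h := (AddMonoidHom.mk' f hf).toRatLinearMap.map_smul q x
  simpa [Rat.smul_def] using h

private lemma aux_f0 (f : ℝ → ℝ) (hf : ∀ x y : ℝ, f (x + y) = f x + f y) : f 0 = 0 := by
  have := hf 0 0; simpa using this.symm

private lemma aux_fneg (f : ℝ → ℝ) (hf : ∀ x y : ℝ, f (x + y) = f x + f y) (x : ℝ) :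
    f (-x) = - f x := by
  have h := hf x (-x)
  rw [add_neg_cancel, aux_f0 f hf] at h
  linarith

private lemma aux_fsum (f : ℝ → ℝ) (hf : ∀ x y : ℝ, f (x + y) = f x + f y)
    {ι : Type*} (s : Finset ι) (g : ι → ℝ) : f (∑ i ∈ s, g i) = ∑ i ∈ s, f (g i) := by
  classical
  induction s using Finset.induction_on with
  | empty => simpa using aux_f0 f hf
  | insert _ _ h ih => rw [Finset.sum_insert h, Finset.sum_insert h, hf, ih]

private lemma aux_Fpow (F : ℝ → ℝ) (hadd : ∀ x y : ℝ, F (x + y) = F x + F y)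
    (x : ℝ) (q : ℚ) (L : ℕ) :
    F ((x + (q : ℝ)) ^ L) = ∑ k ∈ Finset.range (L + 1),
      F (x ^ k) * (L.choose k) * (q : ℝ) ^ (L - k) := by
  rw [add_pow, aux_fsum F hadd]
  refine Finset.sum_congr rfl ?_
  intro k hk
  have e : x ^ k * (q : ℝ) ^ (L - k) * (L.choose k : ℝ)
      = ((q ^ (L - k) * (L.choose k : ℚ) : ℚ) : ℝ) * x ^ k := by
    push_cast; ring
  rw [e, aux_ratmul F hadd]
  push_cast; ring

open Polynomial in
private lemma aux_coeff (c : ℕ → ℝ) (L d : ℕ) :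
    (∑ k ∈ Finset.range (L + 1), C (c k) * X ^ (L - k) : ℝ[X]).coeff d
      = if d ≤ L then c (L - d) else 0 := by
  rw [Polynomial.finset_sum_coeff]
  by_cases hd : d ≤ L
  · rw [if_pos hd]
    rw [Finset.sum_eq_single (L - d)]
    · rw [Polynomial.coeff_C_mul, Polynomial.coeff_X_pow]
      have : L - (L - d) = d := by omega
      rw [this, if_pos rfl, mul_one]
    · intro k hk hne
      rw [Polynomial.coeff_C_mul, Polynomial.coeff_X_pow]
      have hkL : k ≤ L := by simpa [Nat.lt_succ_iff] using Finset.mem_range.mp hk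
      have : ¬ (d = L - k) := by omega
      rw [if_neg this, mul_zero]
    · intro h
      exact absurd (Finset.mem_range.mpr (by omega)) h
  · rw [if_neg hd]
    refine Finset.sum_eq_zero ?_
    intro k hk
    rw [Polynomial.coeff_C_mul, Polynomial.coeff_X_pow]
    have hkL : k ≤ L := by simpa [Nat.lt_succ_iff] using Finset.mem_range.mp hk
    have : ¬ (d = L - k) := by omega
    rw [if_neg this, mul_zero]

open Polynomial in
private lemma aux_eval (c : ℕ → ℝ) (L : ℕ) (r : ℝ) :
    (∑ k ∈ Finset.range (L + 1), C (c k) * X ^ (L - k) : ℝ[X]).eval r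
      = ∑ k ∈ Finset.range (L + 1), c k * r ^ (L - k) := by
  rw [Polynomial.eval_finset_sum]
  refine Finset.sum_congr rfl fun k _ => ?_
  simp

open Polynomial Finset in
private lemma aux_main (F : ℝ → ℝ) (hadd : ∀ x y : ℝ, F (x + y) = F x + F y)
    (hF1 : F 1 = 0) (N M : ℕ) (hM : 1 ≤ M) (hMN : M < N) (lam : ℝ)
    (hrel : ∀ x : ℝ, F (x ^ N) = lam * x ^ (N - M) * F (x ^ M)) (x : ℝ) :
    (N : ℝ) * F x = lam * ((M : ℝ) * F x) ∧
    (N.choose 2 : ℝ) * F (x ^ 2) =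
      lam * ((M.choose 2 : ℝ) * F (x ^ 2) + ((N : ℝ) - M) * M * x * F x) := by
  set R := N - M with hR
  have hR1 : 1 ≤ R := by omega
  set P : ℝ[X] := ∑ k ∈ Finset.range (N + 1), C (F (x ^ k) * (N.choose k)) * X ^ (N - k) with hP
  set A : ℝ[X] := ∑ i ∈ Finset.range (R + 1), C (x ^ i * (R.choose i)) * X ^ (R - i) with hA
  set B : ℝ[X] := ∑ k ∈ Finset.range (M + 1), C (F (x ^ k) * (M.choose k)) * X ^ (M - k) with hB
  have hPQ : P = C lam * A * B := by
    have hroot : ∀ q : ℚ, (P - C lam * A * B).eval (q : ℝ) = 0 := by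
      intro q
      have hPe : P.eval (q : ℝ) = F ((x + (q : ℝ)) ^ N) := by
        rw [hP, aux_eval, aux_Fpow F hadd]
      have hAe : A.eval (q : ℝ) = (x + (q : ℝ)) ^ R := by
        rw [hA, aux_eval, add_pow]
        exact Finset.sum_congr rfl fun k _ => by ring
      have hBe : B.eval (q : ℝ) = F ((x + (q : ℝ)) ^ M) := by
        rw [hB, aux_eval, aux_Fpow F hadd]
      rw [Polynomial.eval_sub, Polynomial.eval_mul, Polynomial.eval_mul,
        Polynomial.eval_C, hPe, hAe, hBe, hrel (x + (q : ℝ))]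
      ring
    have hz : P - C lam * A * B = 0 := by
      apply Polynomial.eq_zero_of_infinite_isRoot
      apply Set.Infinite.mono (s := Set.range ((↑·) : ℚ → ℝ))
      · rintro r ⟨q, rfl⟩
        exact hroot q
      · exact Set.infinite_range_of_injective Rat.cast_injective
    exact sub_eq_zero.mp hz
  have hc1 : P.coeff (N - 1) = (C lam * A * B).coeff (N - 1) := by rw [hPQ]
  have hc2 : P.coeff (N - 2) = (C lam * A * B).coeff (N - 2) := by rw [hPQ]
  have hcoeffP : ∀ d, P.coeff d = if d ≤ N then F (x ^ (N - d)) * (N.choose (N - d)) else 0 :=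
    fun d => aux_coeff _ N d
  have hcoeffA : ∀ d, A.coeff d = if d ≤ R then x ^ (R - d) * (R.choose (R - d)) else 0 :=
    fun d => aux_coeff _ R d
  have hcoeffB : ∀ d, B.coeff d = if d ≤ M then F (x ^ (M - d)) * (M.choose (M - d)) else 0 :=
    fun d => aux_coeff _ M d
  have hAB : ∀ d, (C lam * A * B).coeff d
      = lam * ∑ k ∈ Finset.range (d + 1), A.coeff k * B.coeff (d - k) := by
    intro d
    rw [mul_assoc, Polynomial.coeff_C_mul, Polynomial.coeff_mul,
      Finset.Nat.sum_antidiagonal_eq_sum_range_succ_mk]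
  constructor
  · have hL : P.coeff (N - 1) = F x * N := by
      rw [hcoeffP, if_pos (by omega)]
      have e1 : N - (N - 1) = 1 := by omega
      rw [e1, pow_one, Nat.choose_one_right]
    have hRmem : R ∈ Finset.range (N - 1 + 1) := Finset.mem_range.mpr (by omega)
    have hRHS : (C lam * A * B).coeff (N - 1) = lam * (F x * M) := by
      rw [hAB]
      congr 1
      rw [Finset.sum_eq_single_of_mem R hRmem]
      · rw [hcoeffA, if_pos le_rfl, hcoeffB, if_pos (by omega)]
        have e2 : R - R = 0 := by omega
        have e3 : N - 1 - R = M - 1 := by omega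
        have e4 : M - (M - 1) = 1 := by omega
        rw [e2, e3, e4]
        simp [Nat.choose_one_right]
      · intro k hk hne
        rcases lt_or_gt_of_ne hne with hlt | hgt
        · by_cases hkM : N - 1 - k = M
          · rw [hcoeffB, if_pos (by omega), hkM]
            have : M - M = 0 := by omega
            rw [this, pow_zero, hF1]
            ring
          · rw [hcoeffB, if_neg (by omega), mul_zero]
        · rw [hcoeffA, if_neg (by omega), zero_mul]
    rw [hL] at hc1; rw [hRHS] at hc1
    linear_combination hc1
  · have hL : P.coeff (N - 2) = F (x ^ 2) * (N.choose 2) := by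
      rw [hcoeffP, if_pos (by omega)]
      have e1 : N - (N - 2) = 2 := by omega
      rw [e1]
    have hRHS : (C lam * A * B).coeff (N - 2)
        = lam * ((M.choose 2 : ℝ) * F (x ^ 2) + ((N : ℝ) - M) * M * x * F x) := by
      rw [hAB]
      congr 1
      by_cases hM2 : 2 ≤ M
      · have hRmem : R ∈ Finset.range (N - 2 + 1) := Finset.mem_range.mpr (by omega)
        rw [← Finset.add_sum_erase _ _ hRmem]
        have hR1mem : R - 1 ∈ (Finset.range (N - 2 + 1)).erase R := by
          rw [Finset.mem_erase]
          exact ⟨by omega, Finset.mem_range.mpr (by omega)⟩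
        rw [Finset.sum_eq_single_of_mem (R - 1) hR1mem]
        · rw [hcoeffA, if_pos le_rfl, hcoeffA, if_pos (by omega),
            hcoeffB, if_pos (by omega), hcoeffB, if_pos (by omega)]
          have e1 : R - R = 0 := by omega
          have e2 : N - 2 - R = M - 2 := by omega
          have e3 : M - (M - 2) = 2 := by omega
          have e4 : R - (R - 1) = 1 := by omega
          have e5 : N - 2 - (R - 1) = M - 1 := by omega
          have e6 : M - (M - 1) = 1 := by omega
          have hRcast : ((R : ℕ) : ℝ) = (N : ℝ) - M := by
            rw [hR, Nat.cast_sub hMN.le]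
          rw [e1, e2, e3, e4, e5, e6]
          simp only [Nat.choose_zero_right, Nat.choose_one_right, pow_zero, pow_one,
            Nat.cast_one, one_mul, hRcast]
          push_cast; ring
        · intro k hk hne
          have hkR : k ≠ R := (Finset.mem_erase.mp hk).1
          rcases lt_or_gt_of_ne hkR with hlt | hgt
          · by_cases hkM : N - 2 - k = M
            · rw [hcoeffB, if_pos (by omega), hkM]
              have : M - M = 0 := by omega
              rw [this, pow_zero, hF1]; ring
            · have : ¬ (N - 2 - k ≤ M) := by omega
              rw [hcoeffB, if_neg this, mul_zero]
          · rw [hcoeffA, if_neg (by omega), zero_mul]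
      · have hM1 : M = 1 := by omega
        have hmem : N - 2 ∈ Finset.range (N - 2 + 1) := Finset.mem_range.mpr (by omega)
        rw [Finset.sum_eq_single_of_mem (N - 2) hmem]
        · rw [hcoeffA, if_pos (by omega), hcoeffB, if_pos (by omega)]
          have e1 : R - (N - 2) = 1 := by omega
          have e2 : N - 2 - (N - 2) = 0 := by omega
          have e3 : M - 0 = 1 := by omega
          have hRcast : ((R : ℕ) : ℝ) = (N : ℝ) - M := by
            rw [hR, Nat.cast_sub hMN.le]
          have h1 : (M.choose 2 : ℝ) = 0 := by rw [hM1]; norm_num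
          rw [e1, e2, e3]
          simp only [Nat.choose_one_right, pow_one, hRcast, h1, hM1]
          norm_num
          left; ring
        · intro k hk hne
          have hkN : k < N - 2 := by
            have := Finset.mem_range.mp hk; omega
          by_cases hkM : N - 2 - k = M
          · rw [hcoeffB, if_pos (by omega), hkM]
            have : M - M = 0 := by omega
            rw [this, pow_zero, hF1]; ring
          · have : ¬ (N - 2 - k ≤ M) := by omega
            rw [hcoeffB, if_neg this, mul_zero]
    rw [hL] at hc2; rw [hRHS] at hc2
    linear_combination hc2

private lemma aux_core (F : ℝ → ℝ) (hadd : ∀ x y : ℝ, F (x + y) = F x + F y)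
    (hF1 : F 1 = 0) (N M : ℕ) (hM : 1 ≤ M) (hMN : M < N) (lam : ℝ)
    (hrel : ∀ x : ℝ, F (x ^ N) = lam * x ^ (N - M) * F (x ^ M)) :
    (∀ x : ℝ, F x = 0) ∨ (∀ x : ℝ, F (x ^ 2) = 2 * x * F x) := by
  by_cases h0 : ∀ x : ℝ, F x = 0
  · exact Or.inl h0
  · right
    push_neg at h0
    obtain ⟨x₀, hx₀⟩ := h0
    have hNlam : (N : ℝ) = lam * M := by
      have h := (aux_main F hadd hF1 N M hM hMN lam hrel x₀).1
      have h2 : ((N : ℝ) - lam * M) * F x₀ = 0 := by linear_combination h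
      rcases mul_eq_zero.mp h2 with h3 | h3
      · linarith
      · exact absurd h3 hx₀
    intro x
    have hBx := (aux_main F hadd hF1 N M hM hMN lam hrel x).2
    rw [Nat.cast_choose_two, Nat.cast_choose_two] at hBx
    have hN0 : (N : ℝ) ≠ 0 := by
      have : 0 < N := by omega
      exact_mod_cast this.ne'
    have hNM : (N : ℝ) - M ≠ 0 := by
      have : (M : ℝ) < N := by exact_mod_cast hMN
      linarith
    have key : (N : ℝ) * ((N : ℝ) - M) * (F (x ^ 2) - 2 * x * F x) = 0 := by
      linear_combination 2 * hBx - ((M : ℝ) - 1) * F (x ^ 2) * hNlam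
        - 2 * ((N : ℝ) - (M : ℝ)) * x * F x * hNlam
    rcases mul_eq_zero.mp key with h | h
    · rcases mul_eq_zero.mp h with h' | h'
      · exact absurd h' hN0
      · exact absurd h' hNM
    · linarith

private lemma aux_mul (F : ℝ → ℝ) (hadd : ∀ x y : ℝ, F (x + y) = F x + F y)
    (hsq : ∀ x : ℝ, F (x ^ 2) = 2 * x * F x) :
    ∀ x y : ℝ, F (x * y) = x * F y + y * F x := by
  intro x y
  have h1 := hsq (x + y)
  have e : (x + y) ^ 2 = x ^ 2 + (x * y + (x * y + y ^ 2)) := by ring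
  rw [e, hadd, hadd, hadd, hsq x, hsq y, hadd x y] at h1
  linarith

private lemma aux_npow (F : ℝ → ℝ) (hmul : ∀ x y : ℝ, F (x * y) = x * F y + y * F x) :
    ∀ (x : ℝ) (j : ℕ), F (x ^ (j + 1)) = (j + 1 : ℝ) * x ^ j * F x := by
  intro x j
  induction j with
  | zero => simp
  | succ i ih =>
    have : x ^ (i + 2) = x * x ^ (i + 1) := by ring
    rw [this, hmul, ih]
    push_cast
    ring

private lemma aux_F1 (F : ℝ → ℝ) (hmul : ∀ x y : ℝ, F (x * y) = x * F y + y * F x) :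
    F 1 = 0 := by
  have := hmul 1 1
  simp at this
  linarith

private lemma aux_inv (F : ℝ → ℝ) (hmul : ∀ x y : ℝ, F (x * y) = x * F y + y * F x)
    (x : ℝ) (hx : x ≠ 0) : F x⁻¹ = - (x⁻¹ ^ 2) * F x := by
  have h := hmul x x⁻¹
  rw [mul_inv_cancel₀ hx, aux_F1 F hmul] at h
  field_simp at h ⊢
  linarith

private lemma aux_zpow (F : ℝ → ℝ) (hmul : ∀ x y : ℝ, F (x * y) = x * F y + y * F x)
    (x : ℝ) (hx : x ≠ 0) (k : ℤ) : F (x ^ k) = (k : ℝ) * x ^ (k - 1) * F x := by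
  rcases k with j | j
  · rcases j with _ | i
    · simpa using aux_F1 F hmul
    · have h := aux_npow F hmul x i
      have e1 : x ^ (Int.ofNat (i + 1)) = x ^ (i + 1 : ℕ) := zpow_natCast x (i + 1)
      have e2 : x ^ ((Int.ofNat (i + 1)) - 1) = x ^ (i : ℕ) := by
        rw [show (Int.ofNat (i + 1)) - 1 = (i : ℤ) by simp [Int.ofNat_eq_natCast],
          zpow_natCast]
      rw [e1, e2, h]
      push_cast [Int.ofNat_eq_natCast]
      ring
  · have h := aux_npow F hmul x j
    have hxj : (x ^ (j + 1 : ℕ)) ≠ 0 := pow_ne_zero _ hx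
    have e1 : x ^ (Int.negSucc j) = (x ^ (j + 1 : ℕ))⁻¹ := by
      rw [zpow_negSucc]
    rw [e1, aux_inv F hmul _ hxj, h]
    have e2 : x ^ ((Int.negSucc j) - 1) = (x ^ (j + 2 : ℕ))⁻¹ := by
      rw [show (Int.negSucc j) - 1 = -(j + 2 : ℕ) by simp [Int.negSucc_eq]; push_cast; ring,
        zpow_neg, zpow_natCast]
    rw [e2]
    rw [inv_pow, ← pow_mul]
    have : (j + 1) * 2 = (j + 2) + j := by ring
    rw [this, pow_add]
    field_simp
    simp only [Int.cast_negSucc]; push_cast; ring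

private lemma aux_postoall (F : ℝ → ℝ) (hadd : ∀ x y : ℝ, F (x + y) = F x + F y)
    (h : ∀ y : ℝ, 0 < y → F y = 0) : ∀ y : ℝ, F y = 0 := by
  intro y
  rcases lt_trichotomy y 0 with hy | hy | hy
  · have := h (-y) (by linarith)
    rw [aux_fneg F hadd] at this
    linarith
  · rw [hy]; exact aux_f0 F hadd
  · exact h y hy

private lemma aux_surj (k : ℤ) (hk : k ≠ 0) (y : ℝ) (hy : 0 < y) :
    ∃ x : ℝ, x ≠ 0 ∧ x ^ k = y := by
  refine ⟨y ^ ((k : ℝ)⁻¹), ?_, ?_⟩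
  · exact (Real.rpow_pos_of_pos hy _).ne'
  · have hk' : ((k : ℤ) : ℝ) ≠ 0 := Int.cast_ne_zero.mpr hk
    rw [← Real.rpow_intCast (y ^ ((k : ℝ)⁻¹)) k, ← Real.rpow_mul hy.le]
    rw [inv_mul_cancel₀ hk', Real.rpow_one]

private lemma aux_sqext (F : ℝ → ℝ) (hadd : ∀ x y : ℝ, F (x + y) = F x + F y)
    (h : ∀ y : ℝ, 0 < y → F (y ^ 2) = 2 * y * F y) :
    ∀ x : ℝ, F (x ^ 2) = 2 * x * F x := by
  intro x
  rcases lt_trichotomy x 0 with hx | hx | hx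
  · have h1 := h (-x) (by linarith)
    rw [show (-x) ^ 2 = x ^ 2 by ring, aux_fneg F hadd] at h1
    rw [h1]; ring
  · rw [hx]
    rw [show (0:ℝ) ^ 2 = 0 by ring, aux_f0 F hadd]
    ring
  · exact h x hx

private lemma aux_mneg (F : ℝ → ℝ) (hadd : ∀ x y : ℝ, F (x + y) = F x + F y)
    (hF1 : F 1 = 0) (κ : ℝ)
    (hkey : ∀ y : ℝ, 0 < y → F y = κ * y ^ 2 * F y⁻¹) :
    ∀ x : ℝ, F (x ^ 2) = 2 * x * F x := by
  have hsq1 : ∀ y : ℝ, 0 < y → (1 - κ ^ 2) * F y = 0 := by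
    intro y hy
    have h1 := hkey y hy
    have h2 := hkey y⁻¹ (inv_pos.mpr hy)
    rw [inv_inv] at h2
    rw [h2] at h1
    have hy0 : y ≠ 0 := hy.ne'
    have e : y ^ 2 * (y⁻¹) ^ 2 = 1 := by field_simp
    linear_combination h1 + κ ^ 2 * F y * e
  by_cases hκ2 : κ ^ 2 = 1
  · apply aux_sqext F hadd
    intro y hy
    have hy0 : y ≠ 0 := hy.ne'
    have hy1 : (0:ℝ) < y + 1 := by linarith
    have hy2 : (0:ℝ) < y ^ 2 + y := by positivity
    have key2 : ∀ z : ℝ, 0 < z → z ^ 2 * F z⁻¹ = κ * F z := by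
      intro z hz
      have h := hkey z⁻¹ (inv_pos.mpr hz)
      rw [inv_inv] at h
      have hz0 : z ≠ 0 := hz.ne'
      have e : z ^ 2 * (z⁻¹) ^ 2 = 1 := by field_simp
      linear_combination z ^ 2 * h + κ * F z * e
    have E0 : F y⁻¹ = F (y + 1)⁻¹ + F (y ^ 2 + y)⁻¹ := by
      rw [← hadd]
      congr 1
      field_simp
    have k1 := key2 y hy
    have k2 := key2 (y + 1) hy1
    have k3 := key2 (y ^ 2 + y) hy2
    have ha1 : F (y + 1) = F y := by rw [hadd, hF1, add_zero]
    have ha2 : F (y ^ 2 + y) = F (y ^ 2) + F y := hadd _ _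
    have c1 : (y + 1) ^ 2 * (κ * F y) = κ * (y ^ 2 * F y + (F (y ^ 2) + F y)) := by
      calc (y + 1) ^ 2 * (κ * F y) = (y + 1) ^ 2 * (y ^ 2 * F y⁻¹) := by rw [k1]
        _ = y ^ 2 * (y + 1) ^ 2 * (F (y + 1)⁻¹ + F (y ^ 2 + y)⁻¹) := by rw [← E0]; ring
        _ = y ^ 2 * ((y + 1) ^ 2 * F (y + 1)⁻¹) + (y ^ 2 + y) ^ 2 * F (y ^ 2 + y)⁻¹ := by
            ring
        _ = y ^ 2 * (κ * F (y + 1)) + κ * F (y ^ 2 + y) := by rw [k2, k3]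
        _ = κ * (y ^ 2 * F y + (F (y ^ 2) + F y)) := by rw [ha1, ha2]; ring
    have hκ0 : κ ≠ 0 := by intro h; rw [h] at hκ2; norm_num at hκ2
    have c2 : (y + 1) ^ 2 * F y = y ^ 2 * F y + (F (y ^ 2) + F y) :=
      mul_left_cancel₀ hκ0 (by linear_combination c1)
    linear_combination -c2
  · have hvan : ∀ y : ℝ, 0 < y → F y = 0 := by
      intro y hy
      have h := hsq1 y hy
      rcases mul_eq_zero.mp h with h' | h'
      · exact absurd (by linarith : κ ^ 2 = 1) hκ2
      · exact h'
    have hall := aux_postoall F hadd hvan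
    intro x
    rw [hall (x ^ 2), hall x]
    ring

private lemma aux_exact (f : ℝ → ℝ) (hf : ∀ x y : ℝ, f (x + y) = f x + f y)
    (κ : ℝ) (n m : ℤ) (hn0 : n ≠ 0) (K : ℝ)
    (hK : ∀ x : ℝ, x ≠ 0 → |f (x ^ n) - κ * x ^ (n - m) * f (x ^ m)| ≤ K) :
    ∀ x : ℝ, x ≠ 0 → f (x ^ n) = κ * x ^ (n - m) * f (x ^ m) := by
  intro x hx
  set g : ℝ := f (x ^ n) - κ * x ^ (n - m) * f (x ^ m) with hg
  have key : ∀ q : ℚ, q ≠ 0 → |((q : ℝ) ^ n)| * |g| ≤ K := by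
    intro q hq
    have hq' : (q : ℝ) ≠ 0 := Rat.cast_ne_zero.mpr hq
    have h := hK ((q : ℝ) * x) (mul_ne_zero hq' hx)
    have e : ∀ l : ℤ, f (((q : ℝ) * x) ^ l) = (q : ℝ) ^ l * f (x ^ l) := by
      intro l
      rw [mul_zpow, ← Rat.cast_zpow, aux_ratmul f hf, Rat.cast_zpow]
    have e2 : f (((q : ℝ) * x) ^ n) - κ * ((q : ℝ) * x) ^ (n - m) * f (((q : ℝ) * x) ^ m)
        = (q : ℝ) ^ n * g := by
      rw [e n, e m, mul_zpow, hg]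
      have : ((q : ℝ)) ^ (n - m) * ((q : ℝ)) ^ m = (q : ℝ) ^ n := by
        rw [← zpow_add₀ hq']; congr 1; ring
      linear_combination (-(κ * x ^ (n - m) * f (x ^ m))) * this
    rw [e2, abs_mul] at h
    exact h
  by_contra hgne
  have hgpos : 0 < |g| := abs_pos.mpr fun h => hgne (by rw [hg] at h; linarith [h])
  obtain ⟨t, ht⟩ := pow_unbounded_of_one_lt (K / |g|) (by norm_num : (1 : ℝ) < 2)
  set e : ℤ := if 0 < n then (t : ℤ) else -(t : ℤ) with he
  set q : ℚ := (2 : ℚ) ^ e with hq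
  have hqne : q ≠ 0 := zpow_ne_zero _ (by norm_num)
  have hcast : ((q : ℝ)) = (2 : ℝ) ^ e := by
    rw [hq]; push_cast; ring
  have hte : (t : ℤ) ≤ e * n := by
    rcases lt_or_ge 0 n with h | h
    · rw [he, if_pos h]; nlinarith [h]
    · have hn : n < 0 := lt_of_le_of_ne h hn0
      rw [he, if_neg (by omega)]
      nlinarith [hn]
  have h2t : (2 : ℝ) ^ (t : ℕ) ≤ |((q : ℝ)) ^ n| := by
    rw [hcast, ← zpow_mul]
    rw [abs_of_pos (zpow_pos (by norm_num : (0:ℝ) < 2) _)]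
    calc (2 : ℝ) ^ (t : ℕ) = (2 : ℝ) ^ ((t : ℕ) : ℤ) := by rw [zpow_natCast]
      _ ≤ (2 : ℝ) ^ (e * n) := by
        apply zpow_le_zpow_right₀ (by norm_num : (1:ℝ) ≤ 2) hte
  have hK2 := key q hqne
  have hfin : (2 : ℝ) ^ (t : ℕ) * |g| ≤ K :=
    le_trans (by apply mul_le_mul_of_nonneg_right h2t (abs_nonneg g)) hK2
  have hdiv : K / |g| < 2 ^ t := ht
  have hKlt : K < 2 ^ t * |g| := by
    rw [div_lt_iff₀ hgpos] at hdiv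
    linarith
  linarith

private lemma aux_finish (F : ℝ → ℝ) (hadd : ∀ x y : ℝ, F (x + y) = F x + F y)
    (hF1 : F 1 = 0) (u v : ℤ) (hv : 1 ≤ v) (huv : v < u) (lam : ℝ)
    (hrel : ∀ x : ℝ, x ≠ 0 → F (x ^ u) = lam * x ^ (u - v) * F (x ^ v)) :
    ∀ x : ℝ, F (x ^ 2) = 2 * x * F x := by
  set U : ℕ := u.toNat with hU
  set V : ℕ := v.toNat with hV
  have hUc : ((U : ℕ) : ℤ) = u := Int.toNat_of_nonneg (by omega)
  have hVc : ((V : ℕ) : ℤ) = v := Int.toNat_of_nonneg (by omega)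
  have hV1 : 1 ≤ V := by omega
  have hVU : V < U := by omega
  have hrelN : ∀ x : ℝ, F (x ^ U) = lam * x ^ (U - V) * F (x ^ V) := by
    intro x
    by_cases hx : x = 0
    · subst hx
      rw [zero_pow (by omega : U ≠ 0), zero_pow (by omega : U - V ≠ 0), aux_f0 F hadd]
      ring
    · have h := hrel x hx
      rw [show u = ((U : ℕ) : ℤ) from hUc.symm, show v = ((V : ℕ) : ℤ) from hVc.symm] at h
      rw [zpow_natCast, zpow_natCast] at h
      rw [show ((U : ℕ) : ℤ) - ((V : ℕ) : ℤ) = ((U - V : ℕ) : ℤ) by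
        rw [Nat.cast_sub hVU.le], zpow_natCast] at h
      exact h
  rcases aux_core F hadd hF1 U V hV1 hVU lam hrelN with h | h
  · intro x; rw [h, h]; ring
  · exact h

end AuxStmt11

theorem stmt_11 (f : ℝ → ℝ)
    (hf : ∀ x y : ℝ, f (x + y) = f x + f y)
    (κ : ℝ) (n m : ℤ) (hn0 : n ≠ 0) (hn1 : n ≠ 1) (hm0 : m ≠ 0) (hm1 : m ≠ 1) (hnm : n ≠ m)
    (K : ℝ) (hK : ∀ x : ℝ, x ≠ 0 → |f (x ^ n) - κ * x ^ (n - m) * f (x ^ m)| ≤ K) :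
    ∃ F : ℝ → ℝ,
      (∀ x y : ℝ, F (x + y) = F x + F y) ∧
      (∀ x y : ℝ, F (x * y) = x * F y + y * F x) ∧
      (∀ x : ℝ, ((n : ℝ) - κ * m) * F x = 0) ∧
      (∀ x : ℝ, f x = F x + f 1 * x) := by
  have hrel_f := aux_exact f hf κ n m hn0 K hK
  have hκ1 : κ * f 1 = f 1 := by
    have h := hrel_f 1 one_ne_zero
    simpa using h.symm
  set F : ℝ → ℝ := fun x => f x - f 1 * x with hFdef
  have hFadd : ∀ x y : ℝ, F (x + y) = F x + F y := by
    intro x y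
    simp only [hFdef]
    rw [hf]
    ring
  have hF1 : F 1 = 0 := by simp [hFdef]
  have hRel : ∀ x : ℝ, x ≠ 0 → F (x ^ n) = κ * x ^ (n - m) * F (x ^ m) := by
    intro x hx
    simp only [hFdef]
    rw [hrel_f x hx]
    have e : x ^ (n - m) * x ^ m = x ^ n := by
      rw [← zpow_add₀ hx]; congr 1; ring
    linear_combination κ * f 1 * e + (x ^ n) * hκ1
  have hsq : ∀ x : ℝ, F (x ^ 2) = 2 * x * F x := by
    by_cases hκ0 : κ = 0
    · have hvan : ∀ y : ℝ, 0 < y → F y = 0 := by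
        intro y hy
        obtain ⟨x, hx, hxy⟩ := aux_surj n hn0 y hy
        have h := hRel x hx
        rw [hκ0] at h
        rw [hxy] at h
        simpa using h
      have hall := aux_postoall F hFadd hvan
      intro x
      rw [hall, hall]; ring
    · by_cases hmn : m = -n
      · have hkey : ∀ y : ℝ, 0 < y → F y = κ * y ^ 2 * F y⁻¹ := by
          intro y hy
          obtain ⟨x, hx, hxy⟩ := aux_surj n hn0 y hy
          have h := hRel x hx
          rw [hmn] at h
          have e1 : x ^ (n - -n) = (x ^ n) ^ 2 := by
            rw [show n - -n = n * 2 by ring, zpow_mul, zpow_two, pow_two]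
          have e2 : x ^ (-n) = (x ^ n)⁻¹ := zpow_neg x n
          rw [e1, e2, hxy] at h
          exact h
        exact aux_mneg F hFadd hF1 κ hkey
      · have hRel2 : ∀ x : ℝ, x ≠ 0 →
            F (x ^ (n * n)) = κ ^ 2 * x ^ (n * n - m * m) * F (x ^ (m * m)) := by
          intro x hx
          have h1 := hRel (x ^ n) (zpow_ne_zero n hx)
          have h2 := hRel (x ^ m) (zpow_ne_zero m hx)
          rw [← zpow_mul, ← zpow_mul, ← zpow_mul] at h1
          rw [← zpow_mul, ← zpow_mul, ← zpow_mul] at h2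
          rw [show n * m = m * n by ring] at h1
          rw [h2] at h1
          rw [h1]
          rw [show n * n - m * m = n * (n - m) + m * (n - m) by ring, zpow_add₀ hx]
          ring
        have hu1 : 1 ≤ n * n := mul_self_pos.mpr hn0
        have hv1 : 1 ≤ m * m := mul_self_pos.mpr hm0
        have huv : n * n ≠ m * m := by
          intro h
          have h2 : (n - m) * (n + m) = 0 := by linear_combination h
          rcases mul_eq_zero.mp h2 with h3 | h3
          · exact hnm (by omega)
          · exact hmn (by omega)
        rcases lt_or_gt_of_ne huv.symm with hlt | hgt
        · -- m*m < n*n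
          exact aux_finish F hFadd hF1 (n * n) (m * m) hv1 hlt (κ ^ 2) hRel2
        · -- n*n < m*m : invert the relation
          have hκ2 : κ ^ 2 ≠ 0 := pow_ne_zero 2 hκ0
          have hRel2' : ∀ x : ℝ, x ≠ 0 →
              F (x ^ (m * m)) = (κ ^ 2)⁻¹ * x ^ (m * m - n * n) * F (x ^ (n * n)) := by
            intro x hx
            have h := hRel2 x hx
            rw [h]
            have e : x ^ (m * m - n * n) * x ^ (n * n - m * m) = 1 := by
              rw [← zpow_add₀ hx, show m * m - n * n + (n * n - m * m) = 0 by ring,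
                zpow_zero]
            have eκ : (κ ^ 2)⁻¹ * κ ^ 2 = 1 := inv_mul_cancel₀ hκ2
            calc F (x ^ (m * m))
                = ((κ ^ 2)⁻¹ * κ ^ 2) * ((x ^ (m * m - n * n) * x ^ (n * n - m * m))
                    * F (x ^ (m * m))) := by rw [eκ, e]; ring
              _ = (κ ^ 2)⁻¹ * x ^ (m * m - n * n)
                    * (κ ^ 2 * x ^ (n * n - m * m) * F (x ^ (m * m))) := by ring
          exact aux_finish F hFadd hF1 (m * m) (n * n) hu1 hgt ((κ ^ 2)⁻¹) hRel2'
  have hmul := aux_mul F hFadd hsq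
  refine ⟨F, hFadd, hmul, ?_, ?_⟩
  · intro x
    by_cases hx : x = 0
    · rw [hx, aux_f0 F hFadd, mul_zero]
    · have h := hRel x hx
      rw [aux_zpow F hmul x hx n, aux_zpow F hmul x hx m] at h
      have e : x ^ (n - m) * x ^ (m - 1) = x ^ (n - 1) := by
        rw [← zpow_add₀ hx]; congr 1; ring
      have key : ((n : ℝ) - κ * m) * (x ^ (n - 1) * F x) = 0 := by
        linear_combination h + κ * (m : ℝ) * F x * e
      rcases mul_eq_zero.mp key with h' | h'
      · rw [h', zero_mul]
      · rcases mul_eq_zero.mp h' with h'' | h''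
        · exact absurd h'' (zpow_ne_zero _ hx)
        · rw [h'', mul_zero]
  · intro x
    simp only [hFdef]
    ring
end

section
/- (Hyers, real case) Let ε ≥ 0 and suppose f: ℝ → ℝ satisfies |f(x+y) − f(x) − f(y)| ≤ ε for all x, y ∈ ℝ. Then there exists an additive function a: ℝ → ℝ such that |f(x) − a(x)| ≤ ε for all x ∈ ℝ. -/
open Filter Topology

theorem stmt_13 (ε : ℝ) (hε : 0 ≤ ε) (f : ℝ → ℝ)
    (hf : ∀ x y : ℝ, |f (x + y) - f x - f y| ≤ ε) :
    ∃ a : ℝ → ℝ, (∀ x y : ℝ, a (x + y) = a x + a y) ∧ ∀ x : ℝ, |f x - a x| ≤ ε := by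
  set g : ℝ → ℕ → ℝ := fun x n => f (2 ^ n * x) / 2 ^ n with hg
  have hstep : ∀ x n, |g x (n + 1) - g x n| ≤ ε * (1/2) ^ (n+1) := by
    intro x n
    have h := hf (2 ^ n * x) (2 ^ n * x)
    have heq : g x (n+1) - g x n =
        (f (2 ^ n * x + 2 ^ n * x) - f (2 ^ n * x) - f (2 ^ n * x)) / 2 ^ (n+1) := by
      have h2 : (2:ℝ) ^ (n+1) * x = 2 ^ n * x + 2 ^ n * x := by ring
      simp only [hg, ← h2]
      have hp : (2:ℝ) ^ n ≠ 0 := by positivity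
      have hp1 : (2:ℝ) ^ (n+1) ≠ 0 := by positivity
      field_simp
      ring
    rw [heq, abs_div, abs_of_pos (by positivity : (0:ℝ) < 2 ^ (n+1)), div_le_iff₀ (by positivity)]
    calc |f (2 ^ n * x + 2 ^ n * x) - f (2 ^ n * x) - f (2 ^ n * x)| ≤ ε := h
      _ = ε * (1/2)^(n+1) * 2^(n+1) := by
          rw [mul_assoc, div_pow, one_pow, div_mul_cancel₀]
          · ring
          · positivity
  have hcauchy : ∀ x, CauchySeq (g x) := by
    intro x
    apply cauchySeq_of_le_geometric (1/2) (ε/2) (by norm_num)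
    intro n
    rw [dist_eq_norm, Real.norm_eq_abs, abs_sub_comm]
    calc |g x (n+1) - g x n| ≤ ε * (1/2)^(n+1) := hstep x n
      _ = ε/2 * (1/2)^n := by ring
  have hconv : ∀ x, ∃ l, Tendsto (g x) atTop (𝓝 l) :=
    fun x => cauchySeq_tendsto_of_complete (hcauchy x)
  choose a ha using hconv
  have hbnd : ∀ x n, |g x n - f x| ≤ ε * (1 - (1/2)^n) := by
    intro x
    intro n
    induction n with
    | zero => simp [hg]
    | succ n ih =>
      calc |g x (n+1) - f x| ≤ |g x (n+1) - g x n| + |g x n - f x| := by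
            have he : g x (n+1) - f x = (g x (n+1) - g x n) + (g x n - f x) := by ring
            rw [he]; exact abs_add_le _ _
        _ ≤ ε * (1/2)^(n+1) + ε * (1 - (1/2)^n) := add_le_add (hstep x n) ih
        _ = ε * (1 - (1/2)^(n+1)) := by ring
  refine ⟨a, ?_, ?_⟩
  · intro x y
    have h1 : Tendsto (fun n => g (x+y) n - g x n - g y n) atTop
        (𝓝 (a (x+y) - a x - a y)) := ((ha (x+y)).sub (ha x)).sub (ha y)
    have h2 : Tendsto (fun n => g (x+y) n - g x n - g y n) atTop (𝓝 0) := by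
      apply squeeze_zero_norm (a := fun n => ε * (1/2)^n)
      · intro n
        have heq : g (x+y) n - g x n - g y n =
            (f (2^n * x + 2^n * y) - f (2^n * x) - f (2^n * y)) / 2^n := by
          have h2 : (2:ℝ) ^ n * (x + y) = 2 ^ n * x + 2 ^ n * y := by ring
          simp only [hg, ← h2]
          field_simp
          try ring
        rw [Real.norm_eq_abs, heq, abs_div, abs_of_pos (by positivity : (0:ℝ) < 2^n),
          div_le_iff₀ (by positivity)]
        calc |f (2 ^ n * x + 2 ^ n * y) - f (2 ^ n * x) - f (2 ^ n * y)| ≤ ε := hf _ _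
          _ = ε * (1/2)^n * 2^n := by
              rw [mul_assoc, div_pow, one_pow, div_mul_cancel₀]
              · ring
              · positivity
      · have := tendsto_pow_atTop_nhds_zero_of_lt_one (by norm_num : (0:ℝ) ≤ 1/2)
          (by norm_num : (1:ℝ)/2 < 1)
        have := this.const_mul ε
        simpa using this
    have := tendsto_nhds_unique h1 h2
    linarith
  · intro x
    rw [abs_sub_comm]
    have h1 : Tendsto (fun n => |g x n - f x|) atTop (𝓝 |a x - f x|) :=
      ((ha x).sub tendsto_const_nhds).abs
    apply le_of_tendsto h1
    filter_upwards with n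
    calc |g x n - f x| ≤ ε * (1 - (1/2)^n) := hbnd x n
      _ ≤ ε := by nlinarith [pow_nonneg (by norm_num : (0:ℝ) ≤ 1/2) n]
end

section
/- Let g: ℝ → ℝ be additive and suppose there is L ∈ ℝ such that |f(1/x) − (1/x²) g(x)| ≤ L/|x| for all x > 0, where f: ℝ → ℝ is additive. Then |2x g(x) − g(x²)| ≤ L|x| + L|x+1| + L|x(x+1)| + x²|g(1)| for all x > 0. -/
theorem stmt_16 (f g : ℝ → ℝ)
    (hf : ∀ x y : ℝ, f (x + y) = f x + f y)
    (hg : ∀ x y : ℝ, g (x + y) = g x + g y)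
    (L : ℝ) (hL : ∀ x : ℝ, 0 < x → |f (1 / x) - (1 / x ^ 2) * g x| ≤ L / |x|) :
    ∀ x : ℝ, 0 < x →
      |2 * x * g x - g (x ^ 2)| ≤
        L * |x| + L * |x + 1| + L * |x * (x + 1)| + x ^ 2 * |g 1| := by
  -- g is ℚ-linear
  have grat : ∀ (q : ℚ) (x : ℝ), g ((q : ℝ) * x) = (q : ℝ) * g x := by
    intro q x
    have := map_ratCast_smul (AddMonoidHom.mk' g hg) ℝ ℝ q x
    simpa [smul_eq_mul] using this
  have hL0 : 0 ≤ L := by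
    have h := hL 1 one_pos
    have h0 := abs_nonneg (f (1 / 1) - (1 / 1 ^ 2) * g 1)
    have : (0:ℝ) ≤ L / |1| := le_trans h0 h
    simpa using this
  -- key three-point estimate
  have key : ∀ y : ℝ, 0 < y →
      |2 * y * g y - g (y ^ 2) - y ^ 2 * g 1| ≤
        L * (y * (y + 1) ^ 2 + y ^ 2 * (y + 1) + y * (y + 1)) := by
    intro y hy
    have hy1 : (0:ℝ) < y + 1 := by linarith
    have hy2 : (0:ℝ) < y * (y + 1) := by positivity
    have h1 := hL y hy
    have h2 := hL (y + 1) hy1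
    have h3 := hL (y * (y + 1)) hy2
    rw [abs_of_pos hy] at h1
    rw [abs_of_pos hy1] at h2
    rw [abs_of_pos hy2] at h3
    have hfid : f (1 / y) = f (1 / (y + 1)) + f (1 / (y * (y + 1))) := by
      rw [← hf]
      congr 1
      field_simp
    have hg1 : g (y + 1) = g y + g 1 := hg y 1
    have hg2 : g (y * (y + 1)) = g (y ^ 2) + g y := by
      have h : y * (y + 1) = y ^ 2 + y := by ring
      rw [h, hg]
    set a := f (1 / y) - (1 / y ^ 2) * g y with ha
    set b := f (1 / (y + 1)) - (1 / (y + 1) ^ 2) * g (y + 1) with hb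
    set c := f (1 / (y * (y + 1))) - (1 / (y * (y + 1)) ^ 2) * g (y * (y + 1)) with hc
    have main : 2 * y * g y - g (y ^ 2) - y ^ 2 * g 1
        = -(y ^ 2 * (y + 1) ^ 2) * (a - b - c) := by
      rw [ha, hb, hc, hfid, hg1, hg2]
      have hyne : y ≠ 0 := ne_of_gt hy
      have hy1ne : y + 1 ≠ 0 := ne_of_gt hy1
      field_simp
      ring
    have hk : (0:ℝ) ≤ y ^ 2 * (y + 1) ^ 2 := by positivity
    have tri : |a - b - c| ≤ |a| + |b| + |c| := by
      have t1 := abs_sub (a - b) c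
      have t2 := abs_sub a b
      linarith
    have step : |2 * y * g y - g (y ^ 2) - y ^ 2 * g 1|
        ≤ y ^ 2 * (y + 1) ^ 2 * (L / y + L / (y + 1) + L / (y * (y + 1))) := by
      rw [main, abs_mul, abs_neg, abs_of_nonneg hk]
      have : |a| + |b| + |c| ≤ L / y + L / (y + 1) + L / (y * (y + 1)) := by linarith
      have := mul_le_mul_of_nonneg_left (le_trans tri this) hk
      linarith
    have eq2 : y ^ 2 * (y + 1) ^ 2 * (L / y + L / (y + 1) + L / (y * (y + 1)))
        = L * (y * (y + 1) ^ 2 + y ^ 2 * (y + 1) + y * (y + 1)) := by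
      field_simp
    linarith [step, eq2.le, eq2.ge]
  -- rational-shift invariance of E(x) := 2x g(x) - g(x²) - x² g(1)
  have inv : ∀ (x : ℝ) (q : ℚ),
      2 * (x + (q : ℝ)) * g (x + (q : ℝ)) - g ((x + (q : ℝ)) ^ 2) - (x + (q : ℝ)) ^ 2 * g 1
        = 2 * x * g x - g (x ^ 2) - x ^ 2 * g 1 := by
    intro x q
    have hq1 : g ((q : ℝ)) = (q : ℝ) * g 1 := by
      have := grat q 1
      simpa using this
    have hgx : g (x + (q : ℝ)) = g x + (q : ℝ) * g 1 := by rw [hg, hq1]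
    have hsq : g ((x + (q : ℝ)) ^ 2) = g (x ^ 2) + 2 * (q : ℝ) * g x + (q : ℝ) ^ 2 * g 1 := by
      have h1 : (x + (q : ℝ)) ^ 2 = x ^ 2 + (((2 * q : ℚ) : ℝ) * x + ((q ^ 2 : ℚ) : ℝ) * 1) := by
        push_cast
        ring
      rw [h1, hg, hg, grat, grat]
      push_cast
      ring
    rw [hgx, hsq]
    ring
  -- conclude E(x) = 0 for x > 0
  have zero : ∀ x : ℝ, 0 < x → 2 * x * g x - g (x ^ 2) - x ^ 2 * g 1 = 0 := by
    intro x hx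
    set E := 2 * x * g x - g (x ^ 2) - x ^ 2 * g 1 with hE
    have small : ∀ δ : ℝ, 0 < δ → δ < 1 → |E| ≤ 8 * L * δ := by
      intro δ hδ hδ1
      obtain ⟨q, hq1, hq2⟩ := exists_rat_btwn (show -x < -x + δ by linarith)
      have hy : 0 < x + (q : ℝ) := by linarith
      have hyδ : x + (q : ℝ) < δ := by linarith
      set y := x + (q : ℝ) with hyd
      have hk := key y hy
      rw [inv x q] at hk
      have hbound : y * (y + 1) ^ 2 + y ^ 2 * (y + 1) + y * (y + 1) ≤ 8 * δ := by
        nlinarith [hy, hyδ, hδ1]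
      have := mul_le_mul_of_nonneg_left hbound hL0
      calc |E| ≤ L * (y * (y + 1) ^ 2 + y ^ 2 * (y + 1) + y * (y + 1)) := hk
        _ ≤ L * (8 * δ) := this
        _ = 8 * L * δ := by ring
    by_contra hc
    have hEpos : 0 < |E| := abs_pos.mpr hc
    rcases eq_or_lt_of_le hL0 with hL0' | hLpos
    · have := small (1/2) (by norm_num) (by norm_num)
      rw [← hL0'] at this
      simp at this
      exact hc this
    · have hδpos : 0 < min (|E| / (16 * L)) (1/2) := by
        apply lt_min
        · positivity
        · norm_num
      have hδ1 : min (|E| / (16 * L)) (1/2) < 1 := by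
        have := min_le_right (|E| / (16 * L)) (1/2 : ℝ)
        linarith
      have h := small _ hδpos hδ1
      have hle := min_le_left (|E| / (16 * L)) (1/2 : ℝ)
      have : 8 * L * min (|E| / (16 * L)) (1/2) ≤ 8 * L * (|E| / (16 * L)) :=
        mul_le_mul_of_nonneg_left hle (by positivity)
      have heq : 8 * L * (|E| / (16 * L)) = |E| / 2 := by
        field_simp
        ring
      linarith
  intro x hx
  have hz := zero x hx
  have h2 : 2 * x * g x - g (x ^ 2) = x ^ 2 * g 1 := by linarith
  rw [h2, abs_mul, abs_of_nonneg (by positivity : (0:ℝ) ≤ x ^ 2)]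
  have t1 : 0 ≤ L * |x| := mul_nonneg hL0 (abs_nonneg _)
  have t2 : 0 ≤ L * |x + 1| := mul_nonneg hL0 (abs_nonneg _)
  have t3 : 0 ≤ L * |x * (x + 1)| := mul_nonneg hL0 (abs_nonneg _)
  linarith
end
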